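/- arXiv:1709.07019 — 4 statements merged into one kernel-verified Lean document; each statement's English description precedes it below -/
import Mathlib

section
/- Let H' = -∑_{i=1}^{L-1} (Jᵢ σᵢ^z σ_{i+1}^z + hᵢ σᵢ^x) act on L qubits (note: no field term on site L). Then for every natural number n, the partial trace of H'^n over sites 1,…,L-1 is a scalar multiple of the identity on site L. -/
open Matrix Complex

noncomputable section

/-- Pauli X matrix. -/
def σx : Matrix (Fin 2) (Fin 2) ℂ := !![0, 1; 1, 0]
/-- Pauli Y matrix. -/
def σy : Matrix (Fin 2) (Fin 2) ℂ := !![0, -Complex.I; Complex.I, 0]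
/-- Pauli Z matrix. -/
def σz : Matrix (Fin 2) (Fin 2) ℂ := !![1, 0; 0, -1]

/-- The one-site operator `P` acting on site `i` of a collection of qubits
indexed by `ι` (identity on all other sites). -/
def pauliAt {ι : Type} [Fintype ι] [DecidableEq ι] (i : ι)
    (P : Matrix (Fin 2) (Fin 2) ℂ) : Matrix (ι → Fin 2) (ι → Fin 2) ℂ :=
  fun v w => if ∀ j, j ≠ i → v j = w j then P (v i) (w i) else 0

/-- The tensor product `⨂ i, η i` of one-qubit operators, as a matrix on the
full Hilbert space of the qubits indexed by `ι`. -/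
def tensorPauli {ι : Type} [Fintype ι] [DecidableEq ι]
    (η : ι → Matrix (Fin 2) (Fin 2) ℂ) : Matrix (ι → Fin 2) (ι → Fin 2) ℂ :=
  fun v w => ∏ i, η i (v i) (w i)

/-- Partial trace over the sites satisfying `p`; the result is an operator on
the qubits at the remaining sites. -/
def traceOut {ι : Type} [Fintype ι] [DecidableEq ι] (p : ι → Prop) [DecidablePred p]
    (M : Matrix (ι → Fin 2) (ι → Fin 2) ℂ) :
    Matrix ({i // ¬ p i} → Fin 2) ({i // ¬ p i} → Fin 2) ℂ :=
  fun v w => ∑ u : {i : ι // p i} → Fin 2,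
    M (fun i => if h : p i then u ⟨i, h⟩ else v ⟨i, h⟩)
      (fun i => if h : p i then u ⟨i, h⟩ else w ⟨i, h⟩)

/-- The Hamiltonian `H' = -∑_{i=1}^{L-1} (Jᵢ σᵢ^z σ_{i+1}^z + hᵢ σᵢ^x)` on a
chain of `L + 1` qubits (sites `0, …, L`, with no field term on the last site). -/
def Hprime (L : ℕ) (J h : Fin L → ℝ) :
    Matrix (Fin (L + 1) → Fin 2) (Fin (L + 1) → Fin 2) ℂ :=
  -∑ i : Fin L, ((J i : ℂ) • (pauliAt i.castSucc σz * pauliAt i.succ σz)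
      + (h i : ℂ) • pauliAt i.castSucc σx)

/-!
The only term of `H'` acting on the last site is `σᶻ_{L-1} σᶻ_L`, so `H'` never changes the
`σᶻ`-value of the last qubit; and `H'` commutes with the global spin flip `∏ᵢ σᵢˣ`, which
anticommutes with each `σᶻ` and commutes with each `σˣ`. Matrices with either property form a
subalgebra, so both hold for `H'ⁿ`, and both pass to the partial trace. A one-qubit operator that
is diagonal and commutes with `σˣ` is a multiple of the identity.
-/

namespace Matrix

variable {n R : Type*} [Fintype n] [DecidableEq n] [CommSemiring R]

def blockDiagSubalgebra {β : Type*} (f : n → β) : Subalgebra R (Matrix n n R) where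
  carrier := {M | ∀ v w, f v ≠ f w → M v w = 0}
  mul_mem' {A B} hA hB v w hvw := by
    rw [mul_apply]
    refine Finset.sum_eq_zero fun u _ => ?_
    by_cases hu : f u = f w
    · rw [hA v u (hu ▸ hvw), zero_mul]
    · rw [hB u w hu, mul_zero]
  add_mem' hA hB v w hvw := by rw [add_apply, hA v w hvw, hB v w hvw, add_zero]
  algebraMap_mem' r v w hvw := by
    rw [algebraMap_eq_diagonal, diagonal_apply_ne _ fun h => hvw (congrArg f h)]

def invariantSubalgebra (σ : Equiv.Perm n) : Subalgebra R (Matrix n n R) where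
  carrier := {M | M.submatrix σ σ = M}
  mul_mem' {A B} hA hB := by
    change (A * B).submatrix σ σ = A * B
    rw [← submatrix_mul_equiv A B σ σ σ, hA, hB]
  add_mem' {A B} hA hB := by
    change (A + B).submatrix σ σ = A + B
    rw [submatrix_add, Pi.add_apply, Pi.add_apply, hA, hB]
  algebraMap_mem' r := by
    change (algebraMap R (Matrix n n R) r).submatrix σ σ = _
    rw [algebraMap_eq_diagonal, submatrix_diagonal_equiv]
    rfl

theorem mul_mem_invariantSubalgebra_of_submatrix_eq_neg {R : Type*} [CommRing R]
    {σ : Equiv.Perm n} {A B : Matrix n n R}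
    (hA : A.submatrix σ σ = -A) (hB : B.submatrix σ σ = -B) :
    A * B ∈ invariantSubalgebra σ := by
  change (A * B).submatrix σ σ = A * B
  rw [← submatrix_mul_equiv A B σ σ σ, hA, hB, neg_mul_neg]

end Matrix

def spinFlip (ι : Type*) : Equiv.Perm (ι → Fin 2) :=
  Function.Involutive.toPerm (· + 1) fun v => show v + 1 + 1 = v by
    rw [add_assoc, show (1 : ι → Fin 2) + 1 = 0 from funext fun _ => rfl, add_zero]

@[simp]
theorem spinFlip_apply {ι : Type*} (v : ι → Fin 2) : spinFlip ι v = v + 1 := rfl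

theorem isDiag_σz : σz.IsDiag := by
  intro a b hab
  fin_cases a <;> fin_cases b <;> simp_all [σz]

theorem σz_submatrix_add_one : σz.submatrix (· + 1) (· + 1) = -σz := by
  ext a b
  fin_cases a <;> fin_cases b <;> simp [σz]

theorem σx_submatrix_add_one : σx.submatrix (· + 1) (· + 1) = σx := by
  ext a b
  fin_cases a <;> fin_cases b <;> rfl

section pauliAt

variable {ι : Type} [Fintype ι] [DecidableEq ι]

theorem pauliAt_neg (i : ι) (P : Matrix (Fin 2) (Fin 2) ℂ) :
    pauliAt i (-P) = -pauliAt i P := by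
  ext v w
  rw [neg_apply]
  unfold pauliAt
  split_ifs <;> simp

theorem pauliAt_submatrix_spinFlip (i : ι) (P : Matrix (Fin 2) (Fin 2) ℂ) :
    (pauliAt i P).submatrix (spinFlip ι) (spinFlip ι) =
      pauliAt i (P.submatrix (· + 1) (· + 1)) := by
  ext v w
  simp [pauliAt]

theorem pauliAt_mem_blockDiagSubalgebra_of_ne {ℓ i : ι} (h : ℓ ≠ i)
    (P : Matrix (Fin 2) (Fin 2) ℂ) : pauliAt i P ∈ blockDiagSubalgebra fun v => v ℓ :=
  fun _ _ hvw => if_neg fun hc => hvw (hc ℓ h)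

theorem pauliAt_mem_blockDiagSubalgebra_of_isDiag (ℓ i : ι) {P : Matrix (Fin 2) (Fin 2) ℂ}
    (hP : P.IsDiag) : pauliAt i P ∈ blockDiagSubalgebra fun v => v ℓ := by
  intro v w hvw
  obtain rfl | h := eq_or_ne ℓ i
  · unfold pauliAt
    split_ifs
    exacts [hP hvw, rfl]
  · exact pauliAt_mem_blockDiagSubalgebra_of_ne h P v w hvw

end pauliAt

section traceOut

variable {ι : Type} [Fintype ι] [DecidableEq ι] {p : ι → Prop} [DecidablePred p]

theorem traceOut_mem_blockDiagSubalgebra {ℓ : ι} (hℓ : ¬ p ℓ)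
    {M : Matrix (ι → Fin 2) (ι → Fin 2) ℂ} (hM : M ∈ blockDiagSubalgebra fun v => v ℓ) :
    traceOut p M ∈ blockDiagSubalgebra fun v => v ⟨ℓ, hℓ⟩ := by
  intro v w hvw
  refine Finset.sum_eq_zero fun u _ => hM _ _ ?_
  simpa only [dif_neg hℓ] using hvw

theorem traceOut_mem_invariantSubalgebra_spinFlip {M : Matrix (ι → Fin 2) (ι → Fin 2) ℂ}
    (hM : M ∈ invariantSubalgebra (spinFlip ι)) :
    traceOut p M ∈ invariantSubalgebra (spinFlip _) := by
  change (traceOut p M).submatrix (spinFlip _) (spinFlip _) = traceOut p M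
  ext v w
  simp only [submatrix_apply, traceOut]
  rw [← Equiv.sum_comp (spinFlip _)]
  refine Finset.sum_congr rfl fun u _ => ?_
  conv_rhs => rw [← hM]
  congr 1 <;> funext i <;> by_cases hi : p i <;> simp [hi]

end traceOut

theorem eq_smul_one_of_mem_blockDiagSubalgebra_of_mem_invariantSubalgebra {κ R : Type*}
    [Fintype κ] [DecidableEq κ] [Subsingleton κ] [CommSemiring R] (k : κ)
    {M : Matrix (κ → Fin 2) (κ → Fin 2) R} (hd : M ∈ blockDiagSubalgebra fun v => v k)
    (hf : M ∈ invariantSubalgebra (spinFlip κ)) : M = M 0 0 • 1 := by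
  have ext_k : ∀ v w : κ → Fin 2, v k = w k → v = w := fun v w h =>
    funext fun j => Subsingleton.elim k j ▸ h
  ext v w
  by_cases hvw : v = w
  · subst hvw
    rw [Matrix.smul_apply, one_apply_eq, smul_eq_mul, mul_one]
    obtain h0 | h1 : v k = 0 ∨ v k = 1 := by omega
    · rw [ext_k v 0 h0]
    · rw [ext_k v (spinFlip κ 0) h1]
      exact congrFun (congrFun hf 0) 0
  · rw [Matrix.smul_apply, one_apply_ne hvw, smul_zero]
    exact hd v w fun h => hvw (ext_k v w h)

theorem Hprime_mem_blockDiagSubalgebra (L : ℕ) (J h : Fin L → ℝ) :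
    Hprime L J h ∈ blockDiagSubalgebra fun v => v (Fin.last L) :=
  neg_mem <| Subalgebra.sum_mem _ fun i _ => add_mem
    (Subalgebra.smul_mem _ (mul_mem (pauliAt_mem_blockDiagSubalgebra_of_isDiag _ _ isDiag_σz)
      (pauliAt_mem_blockDiagSubalgebra_of_isDiag _ _ isDiag_σz)) _)
    (Subalgebra.smul_mem _
      (pauliAt_mem_blockDiagSubalgebra_of_ne (Fin.castSucc_lt_last i).ne' σx) _)

theorem Hprime_mem_invariantSubalgebra_spinFlip (L : ℕ) (J h : Fin L → ℝ) :
    Hprime L J h ∈ invariantSubalgebra (spinFlip _) := by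
  have hz (i : Fin (L + 1)) :
      (pauliAt i σz).submatrix (spinFlip _) (spinFlip _) = -pauliAt i σz := by
    rw [pauliAt_submatrix_spinFlip, σz_submatrix_add_one, pauliAt_neg]
  have hx (i : Fin (L + 1)) : pauliAt i σx ∈ invariantSubalgebra (spinFlip _) := by
    change (pauliAt i σx).submatrix _ _ = _
    rw [pauliAt_submatrix_spinFlip, σx_submatrix_add_one]
  exact neg_mem <| Subalgebra.sum_mem _ fun i _ => add_mem
    (Subalgebra.smul_mem _ (mul_mem_invariantSubalgebra_of_submatrix_eq_neg (hz _) (hz _)) _)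
    (Subalgebra.smul_mem _ (hx _) _)

theorem traceOut_pow_Hprime_smul_one (L : ℕ) (J h : Fin L → ℝ) (n : ℕ) :
    ∃ c : ℂ, traceOut (fun i : Fin (L + 1) => i ≠ Fin.last L) ((Hprime L J h) ^ n) =
      c • (1 : Matrix ({i : Fin (L + 1) // ¬ i ≠ Fin.last L} → Fin 2)
        ({i : Fin (L + 1) // ¬ i ≠ Fin.last L} → Fin 2) ℂ) := by
  have hlast : ¬ (Fin.last L ≠ Fin.last L) := not_not.mpr rfl
  have : Subsingleton {i : Fin (L + 1) // ¬ i ≠ Fin.last L} :=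
    ⟨fun a b => Subtype.ext ((not_ne_iff.mp a.2).trans (not_ne_iff.mp b.2).symm)⟩
  have hdiag := traceOut_mem_blockDiagSubalgebra (p := fun i => i ≠ Fin.last L) hlast
    (pow_mem (Hprime_mem_blockDiagSubalgebra L J h) n)
  have hflip := traceOut_mem_invariantSubalgebra_spinFlip (p := fun i => i ≠ Fin.last L)
    (pow_mem (Hprime_mem_invariantSubalgebra_spinFlip L J h) n)
  exact ⟨_, eq_smul_one_of_mem_blockDiagSubalgebra_of_mem_invariantSubalgebra _ hdiag hflip⟩
end
end

section
/- Let H' = -∑_{i=1}^{L-1} (Jᵢ σᵢ^z σ_{i+1}^z + hᵢ σᵢ^x) on L qubits. Then the partial trace over sites 1,…,L-1 of exp(-βH') is a scalar multiple of the identity on site L, for every real β. -/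
open Matrix Complex

noncomputable section

/-!
`H'` commutes with `σᶻ` on the last site, since it touches that site only through `σᶻσᶻ`, and
with the global spin flip `⨂ᵢ σˣ`, which negates every `σᶻ` and so fixes each `σᶻσᶻ` coupling.
Hence so does `exp (-βH')`. The first symmetry makes `exp (-βH')` block diagonal in the last qubit,
so its partial trace is diagonal; the second exchanges the two blocks, so the two diagonal
entries coincide.
-/

variable {ι : Type} [Fintype ι] [DecidableEq ι]

lemma tensorPauli_mul (η η' : ι → Matrix (Fin 2) (Fin 2) ℂ) :
    tensorPauli η * tensorPauli η' = tensorPauli (fun i => η i * η' i) := by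
  ext v w
  simp only [mul_apply, tensorPauli, ← Finset.prod_mul_distrib]
  rw [Finset.prod_univ_sum, Fintype.piFinset_univ]

lemma tensorPauli_smul (c : ι → ℂ) (η : ι → Matrix (Fin 2) (Fin 2) ℂ) :
    tensorPauli (fun i => c i • η i) = (∏ i, c i) • tensorPauli η := by
  ext v w
  simp [tensorPauli, Finset.prod_mul_distrib]

lemma commute_tensorPauli {η η' : ι → Matrix (Fin 2) (Fin 2) ℂ}
    (h : ∀ i, Commute (η i) (η' i)) : Commute (tensorPauli η) (tensorPauli η') := by
  rw [Commute, SemiconjBy, tensorPauli_mul, tensorPauli_mul]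
  exact congrArg tensorPauli (funext h)

lemma pauliAt_eq_tensorPauli (i : ι) (P : Matrix (Fin 2) (Fin 2) ℂ) :
    pauliAt i P = tensorPauli (fun j => if j = i then P else 1) := by
  ext v w
  simp only [pauliAt, tensorPauli]
  by_cases h : ∀ j, j ≠ i → v j = w j
  · rw [if_pos h, Finset.prod_eq_single i (fun j _ hj => by simp [hj, one_apply, h j hj])
      (by simp)]
    simp
  · obtain ⟨j, hj, hvw⟩ := not_forall₂.mp h
    rw [if_neg h, Finset.prod_eq_zero (Finset.mem_univ j) (by simp [hj, one_apply, hvw])]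

lemma commute_pauliAt_of_ne {a b : ι} (hab : a ≠ b) (P Q : Matrix (Fin 2) (Fin 2) ℂ) :
    Commute (pauliAt a P) (pauliAt b Q) := by
  rw [pauliAt_eq_tensorPauli, pauliAt_eq_tensorPauli]
  refine commute_tensorPauli fun i => ?_
  split_ifs with ha hb
  · exact absurd (ha ▸ hb) hab
  all_goals simp

lemma commute_pauliAt_pauliAt (a b : ι) (P : Matrix (Fin 2) (Fin 2) ℂ) :
    Commute (pauliAt a P) (pauliAt b P) := by
  rw [pauliAt_eq_tensorPauli, pauliAt_eq_tensorPauli]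
  refine commute_tensorPauli fun i => ?_
  split_ifs <;> simp

lemma pauliAt_σz_eq_diagonal (a : ι) :
    pauliAt a σz = diagonal fun v => σz (v a) (v a) := by
  ext v w
  by_cases hvw : v = w
  · subst hvw
    simp [pauliAt]
  · rw [diagonal_apply_ne _ hvw, pauliAt]
    split_ifs with h
    · have hva : v a ≠ w a := fun hva => hvw (funext fun j => by
        by_cases hj : j = a
        · exact hj ▸ hva
        · exact h j hj)
      revert hva
      generalize v a = x
      generalize w a = y
      fin_cases x <;> fin_cases y <;> simp [σz]
    · rfl

lemma apply_eq_zero_of_commute_pauliAt_σz {a : ι} {M : Matrix (ι → Fin 2) (ι → Fin 2) ℂ}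
    (hM : Commute (pauliAt a σz) M) {v w : ι → Fin 2} (hvw : v a ≠ w a) : M v w = 0 := by
  have hentry := congrFun (congrFun hM.eq v) w
  rw [pauliAt_σz_eq_diagonal, diagonal_mul, mul_diagonal] at hentry
  have hσz : σz (v a) (v a) ≠ σz (w a) (w a) := by
    revert hvw
    generalize v a = x
    generalize w a = y
    fin_cases x <;> fin_cases y <;> norm_num [σz]
  by_contra hne
  exact hσz (mul_right_cancel₀ hne (by rw [hentry, mul_comm]))

def globalFlip (ι : Type) [Fintype ι] [DecidableEq ι] : Matrix (ι → Fin 2) (ι → Fin 2) ℂ :=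
  tensorPauli fun _ => σx

lemma σx_mul_σz : σx * σz = -(σz * σx) := by
  ext i j
  fin_cases i <;> fin_cases j <;> simp [σx, σz, mul_apply]

lemma globalFlip_mul_pauliAt_σz (a : ι) :
    globalFlip ι * pauliAt a σz = -(pauliAt a σz * globalFlip ι) := by
  rw [pauliAt_eq_tensorPauli, globalFlip, tensorPauli_mul, tensorPauli_mul]
  have hfactor : (fun j => σx * if j = a then σz else 1)
      = fun j => (if j = a then (-1 : ℂ) else 1) • ((if j = a then σz else 1) * σx) := by
    funext j
    split_ifs
    · simpa using σx_mul_σz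
    · simp
  rw [hfactor, tensorPauli_smul, Finset.prod_ite_eq' Finset.univ a fun _ => (-1 : ℂ)]
  simp

lemma commute_globalFlip_pauliAt_σz_mul (a b : ι) :
    Commute (globalFlip ι) (pauliAt a σz * pauliAt b σz) := by
  calc globalFlip ι * (pauliAt a σz * pauliAt b σz)
      = -(pauliAt a σz * (globalFlip ι * pauliAt b σz)) := by
        rw [← mul_assoc, globalFlip_mul_pauliAt_σz, neg_mul, mul_assoc]
    _ = pauliAt a σz * pauliAt b σz * globalFlip ι := by
        rw [globalFlip_mul_pauliAt_σz, mul_neg, neg_neg, mul_assoc]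

lemma commute_globalFlip_pauliAt_σx (a : ι) : Commute (globalFlip ι) (pauliAt a σx) := by
  rw [pauliAt_eq_tensorPauli, globalFlip]
  refine commute_tensorPauli fun i => ?_
  split_ifs <;> simp

lemma globalFlip_eq_toMatrix :
    globalFlip ι = (Equiv.piCongrRight fun _ : ι => Fin.revPerm).toPEquiv.toMatrix := by
  ext v w
  have hσx : ∀ x y : Fin 2, σx x y = if Fin.rev x = y then 1 else 0 := by
    intro x y
    fin_cases x <;> fin_cases y <;> simp [σx]
  simp [globalFlip, tensorPauli, hσx, Finset.prod_boole, PEquiv.toMatrix_apply, funext_iff]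

lemma apply_rev_of_commute_globalFlip {M : Matrix (ι → Fin 2) (ι → Fin 2) ℂ}
    (hM : Commute (globalFlip ι) M) (v w : ι → Fin 2) :
    M (Fin.rev ∘ v) (Fin.rev ∘ w) = M v w := by
  have hentry := congrFun (congrFun hM.eq v) (Fin.rev ∘ w)
  rw [globalFlip_eq_toMatrix, PEquiv.toMatrix_toPEquiv_mul, PEquiv.mul_toMatrix_toPEquiv] at hentry
  exact hentry.trans (congrArg (M v) (Equiv.symm_apply_apply _ w))

section traceOut

variable {p : ι → Prop} [DecidablePred p] {M : Matrix (ι → Fin 2) (ι → Fin 2) ℂ}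

lemma traceOut_apply_eq_zero_of_commute_pauliAt_σz
    (hM : ∀ i, ¬ p i → Commute (pauliAt i σz) M) {v w : {i // ¬ p i} → Fin 2} (hvw : v ≠ w) :
    traceOut p M v w = 0 := by
  obtain ⟨⟨i, hi⟩, hne⟩ := Function.ne_iff.mp hvw
  refine Finset.sum_eq_zero fun u _ => apply_eq_zero_of_commute_pauliAt_σz (hM i hi) ?_
  simpa [dif_neg hi] using hne

lemma traceOut_apply_rev_of_commute_globalFlip (hM : Commute (globalFlip ι) M)
    (v w : {i // ¬ p i} → Fin 2) :
    traceOut p M (Fin.rev ∘ v) (Fin.rev ∘ w) = traceOut p M v w := by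
  refine Fintype.sum_equiv (Equiv.piCongrRight fun _ => Fin.revPerm) _ _ fun u => ?_
  rw [← apply_rev_of_commute_globalFlip hM]
  congr 1 <;> funext i <;> by_cases hi : p i <;> simp [hi]

end traceOut

lemma eq_zero_or_eq_rev_zero {S : Type} [Subsingleton S] (v : S → Fin 2) :
    v = 0 ∨ v = Fin.rev ∘ (0 : S → Fin 2) := by
  refine or_iff_not_imp_left.mpr fun hv => funext fun s => ?_
  obtain ⟨t, ht⟩ := Function.ne_iff.mp hv
  rw [Subsingleton.elim s t]
  revert ht
  generalize v t = x
  fin_cases x <;> simp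

lemma eq_smul_one_of_rev_invariant {S : Type} [Fintype S] [DecidableEq S] [Subsingleton S]
    {A : Matrix (S → Fin 2) (S → Fin 2) ℂ} (hdiag : ∀ v w, v ≠ w → A v w = 0)
    (hrev : ∀ v w, A (Fin.rev ∘ v) (Fin.rev ∘ w) = A v w) : A = A 0 0 • 1 := by
  ext v w
  by_cases hvw : v = w
  · subst hvw
    rw [Matrix.smul_apply, one_apply_eq, smul_eq_mul, mul_one]
    rcases eq_zero_or_eq_rev_zero v with rfl | rfl
    · rfl
    · exact hrev 0 0
  · rw [hdiag v w hvw, Matrix.smul_apply, one_apply_ne hvw, smul_zero]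

lemma commute_pauliAt_last_σz_Hprime (L : ℕ) (J h : Fin L → ℝ) :
    Commute (pauliAt (Fin.last L) σz) (Hprime L J h) := by
  refine (Commute.sum_right _ _ _ fun i _ => ?_).neg_right
  exact (((commute_pauliAt_pauliAt _ _ _).mul_right (commute_pauliAt_pauliAt _ _ _)).smul_right _)
    |>.add_right ((commute_pauliAt_of_ne (Fin.castSucc_lt_last i).ne' _ _).smul_right _)

lemma commute_globalFlip_Hprime (L : ℕ) (J h : Fin L → ℝ) :
    Commute (globalFlip (Fin (L + 1))) (Hprime L J h) := by
  refine (Commute.sum_right _ _ _ fun i _ => ?_).neg_right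
  exact ((commute_globalFlip_pauliAt_σz_mul _ _).smul_right _).add_right
    ((commute_globalFlip_pauliAt_σx _).smul_right _)

theorem traceOut_exp_Hprime_smul_one (L : ℕ) (J h : Fin L → ℝ) (β : ℝ) :
    ∃ c : ℂ, traceOut (fun i : Fin (L + 1) => i ≠ Fin.last L)
        (NormedSpace.exp ((-(β : ℂ)) • Hprime L J h)) =
      c • (1 : Matrix ({i : Fin (L + 1) // ¬ i ≠ Fin.last L} → Fin 2)
        ({i : Fin (L + 1) // ¬ i ≠ Fin.last L} → Fin 2) ℂ) := by
  have hz := ((commute_pauliAt_last_σz_Hprime L J h).smul_right (-(β : ℂ))).exp_right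
  have hflip := ((commute_globalFlip_Hprime L J h).smul_right (-(β : ℂ))).exp_right
  have : Subsingleton {i : Fin (L + 1) // ¬ i ≠ Fin.last L} :=
    ⟨fun a b => Subtype.ext ((not_not.mp a.2).trans (not_not.mp b.2).symm)⟩
  exact ⟨_, eq_smul_one_of_rev_invariant
    (fun _ _ => traceOut_apply_eq_zero_of_commute_pauliAt_σz fun i hi => not_not.mp hi ▸ hz)
    (traceOut_apply_rev_of_commute_globalFlip hflip)⟩
end
end

section
/- For the classical Ising chain Hamiltonian H = -h₁σ₁^z - ∑_{i=1}^{n-1} σᵢ^z σ_{i+1}^z on n qubits, the reduced Gibbs state at inverse temperature β on site i equals ½I + ½ tanh^{i-1}(β) tanh(h₁β) σᵢ^z; in particular it depends on h₁ for every site i. -/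
open Matrix Complex

noncomputable section

/-- The classical Ising chain Hamiltonian
`H = -h₁ σ₁^z - ∑_{i=1}^{n-1} σᵢ^z σ_{i+1}^z` on `n = K + 1` qubits. -/
def classicalH (K : ℕ) (h₁ : ℝ) :
    Matrix (Fin (K + 1) → Fin 2) (Fin (K + 1) → Fin 2) ℂ :=
  -((h₁ : ℂ) • pauliAt (0 : Fin (K + 1)) σz)
    - ∑ i : Fin K, pauliAt i.castSucc σz * pauliAt i.succ σz

/-!
Everything is diagonal in the `σᶻ` basis, so `exp (-βH)` is the diagonal matrix of Boltzmann
weights and the reduced state on site `i` is the diagonal matrix of the marginal weights of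
`σᵢ = ±1`, namely `(Z ± ⟨σᵢ⟩ Z) / 2`. In the domain-wall variables `τ₀ = σ₀`,
`τₖ₊₁ = σₖ σₖ₊₁` (sites counted from `0`; as `Fin 2` is the additive group of spins, these are
`vₖ₊₁ - vₖ` on basis labels) the Boltzmann weight factorises into independent one-spin weights,
with field `h₁β` on `τ₀` and `β` on every wall, while `σᵢ = τ₀ τ₁ ⋯ τᵢ`. Hence
`⟨σᵢ⟩ = tanh (h₁β) tanh (β)^i`.
-/

namespace ClassicalIsing

open Finset

def spin : Fin 2 → ℂ := ![1, -1]

@[simp] lemma spin_zero : spin 0 = 1 := rfl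

@[simp] lemma spin_one : spin 1 = -1 := rfl

lemma spin_add (a b : Fin 2) : spin (a + b) = spin a * spin b := by
  fin_cases a <;> fin_cases b <;> simp [spin]

lemma spin_mul_self (a : Fin 2) : spin a * spin a = 1 := by
  fin_cases a <;> simp

lemma σz_eq_diagonal : σz = diagonal spin := by
  ext a b; fin_cases a <;> fin_cases b <;> simp [σz, spin]

section Sites

variable {ι : Type} [Fintype ι] [DecidableEq ι]

lemma pauliAt_diagonal (i : ι) (d : Fin 2 → ℂ) :
    pauliAt i (diagonal d) = diagonal fun v => d (v i) := by
  ext v w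
  by_cases hvw : v = w
  · subst hvw; simp [pauliAt]
  · have hi : (∀ j, j ≠ i → v j = w j) → v i ≠ w i := fun h hi =>
      hvw <| funext fun j => if hj : j = i then hj ▸ hi else h j hj
    simp only [pauliAt, diagonal_apply, hvw, if_false]
    split_ifs with h <;> simp_all

lemma traceOut_diagonal (p : ι → Prop) [DecidablePred p] (g : (ι → Fin 2) → ℂ) :
    traceOut p (diagonal g) = diagonal fun v =>
      ∑ u : {i // p i} → Fin 2, g fun i => if h : p i then u ⟨i, h⟩ else v ⟨i, h⟩ := by
  ext v w
  by_cases hvw : v = w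
  · subst hvw; simp [traceOut]
  · obtain ⟨j, hj⟩ := Function.ne_iff.mp hvw
    refine (Finset.sum_eq_zero fun u _ => diagonal_apply_ne _ fun h => hj ?_).trans
      (diagonal_apply_ne _ hvw).symm
    simpa [j.2] using congrFun h j

lemma two_mul_sum_piSplitAt_symm (g : (ι → Fin 2) → ℂ) (i : ι) (a : Fin 2) :
    2 * ∑ u, g ((Equiv.piSplitAt i _).symm (a, u)) =
      ∑ x, g x + spin a * ∑ x, spin (x i) * g x := by
  simp only [← (Equiv.piSplitAt i fun _ => Fin 2).symm.sum_comp, Fintype.sum_prod_type,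
    Fin.sum_univ_two, Equiv.piSplitAt_symm_apply, dite_true]
  fin_cases a <;> simp <;> ring

lemma traceOut_ne_diagonal (g : (ι → Fin 2) → ℂ) (i : ι) :
    traceOut (· ≠ i) (diagonal g) = (1 / 2 : ℂ) •
      ((∑ x, g x) • (1 : Matrix ({j // ¬ j ≠ i} → Fin 2) _ ℂ) +
        (∑ x, spin (x i) * g x) • pauliAt (⟨i, by simp⟩ : {j // ¬ j ≠ i}) σz) := by
  rw [traceOut_diagonal, σz_eq_diagonal, pauliAt_diagonal, ← diagonal_one, ← diagonal_smul,
    ← diagonal_smul, diagonal_add, ← diagonal_smul]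
  congr 1
  funext v
  have hglue : ∀ u : {j // j ≠ i} → Fin 2,
      (fun j => if h : j ≠ i then u ⟨j, h⟩ else v ⟨j, h⟩) =
        (Equiv.piSplitAt i _).symm (v ⟨i, by simp⟩, u) := by
    intro u
    funext j
    by_cases h : j = i
    · subst h; simp
    · simp [h]
  simp only [hglue, Pi.smul_apply, smul_eq_mul]
  linear_combination (1 / 2 : ℂ) * two_mul_sum_piSplitAt_symm g i (v ⟨i, by simp⟩)

end Sites

section FreeSpins

variable {ι : Type} [Fintype ι] [DecidableEq ι]

lemma sum_exp_mul_spin (x : ℂ) : ∑ t, cexp (x * spin t) = 2 * cosh x := by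
  simp [Fin.sum_univ_two, two_cosh]

lemma sum_spin_mul_exp_mul_spin (x : ℝ) :
    ∑ t, spin t * cexp (x * spin t) = Real.tanh x * (2 * cosh x) := by
  have hcosh : cosh x ≠ 0 := by exact_mod_cast (Real.cosh_pos x).ne'
  rw [ofReal_tanh, tanh_eq_sinh_div_cosh, mul_left_comm, div_mul_cancel₀ _ hcosh, two_sinh]
  simp [Fin.sum_univ_two, sub_eq_add_neg]

lemma sum_prod_spin_mul_prod_exp (S : Finset ι) (x : ℝ) :
    ∑ τ : ι → Fin 2, (∏ k ∈ S, spin (τ k)) * ∏ k, cexp (x * spin (τ k)) =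
      (Real.tanh x : ℂ) ^ #S * (2 * cosh x) ^ Fintype.card ι := by
  have hsite : ∀ k, ∑ t, (if k ∈ S then spin t else 1) * cexp (x * spin t) =
      (if k ∈ S then (Real.tanh x : ℂ) else 1) * (2 * cosh x) := by
    intro k
    split_ifs
    · exact sum_spin_mul_exp_mul_spin x
    · simpa using sum_exp_mul_spin x
  calc ∑ τ : ι → Fin 2, (∏ k ∈ S, spin (τ k)) * ∏ k, cexp (x * spin (τ k))
      = ∑ τ : ι → Fin 2, ∏ k, (if k ∈ S then spin (τ k) else 1) * cexp (x * spin (τ k)) := by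
        simp_rw [prod_mul_distrib, prod_ite_mem, univ_inter]
    _ = ∏ k, ∑ t, (if k ∈ S then spin t else 1) * cexp (x * spin t) :=
        (Fintype.prod_sum fun k t => (if k ∈ S then spin t else 1) * cexp (x * spin t)).symm
    _ = (Real.tanh x : ℂ) ^ #S * (2 * cosh x) ^ Fintype.card ι := by
        simp_rw [hsite, prod_mul_distrib, prod_ite_mem, univ_inter, prod_const, card_univ, mul_pow]

end FreeSpins

section Chain

variable {K : ℕ}

def isingEnergy (K : ℕ) (h₁ : ℝ) (v : Fin (K + 1) → Fin 2) : ℂ :=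
  -(h₁ * spin (v 0)) - ∑ k : Fin K, spin (v k.castSucc) * spin (v k.succ)

lemma classicalH_eq_diagonal (K : ℕ) (h₁ : ℝ) :
    classicalH K h₁ = diagonal (isingEnergy K h₁) := by
  ext v w
  by_cases hvw : v = w
  · subst hvw
    simp [classicalH, isingEnergy, σz_eq_diagonal, pauliAt_diagonal, Matrix.sum_apply]
  · simp [classicalH, σz_eq_diagonal, pauliAt_diagonal, Matrix.sum_apply, hvw]

lemma exp_smul_classicalH (K : ℕ) (h₁ β : ℝ) :
    NormedSpace.exp ((-(β : ℂ)) • classicalH K h₁) =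
      diagonal fun v => cexp (-β * isingEnergy K h₁ v) := by
  rw [classicalH_eq_diagonal, ← diagonal_smul, exp_diagonal]
  congr 1
  funext v
  rw [Pi.coe_exp, ← exp_eq_exp_ℂ]
  rfl

def domainWall (K : ℕ) : Fin 2 × (Fin K → Fin 2) ≃ (Fin (K + 1) → Fin 2) where
  toFun p j := p.1 + Fin.partialSum p.2 j
  invFun v := (v 0, fun k => -v k.castSucc + v k.succ)
  left_inv := by
    rintro ⟨a, f⟩
    refine Prod.ext (by simp) (funext fun k => ?_)
    simp only [Fin.partialSum_succ]
    abel
  right_inv v := by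
    simpa [funext_iff] using Fin.partialSum_left_neg v

lemma domainWall_apply (a : Fin 2) (f : Fin K → Fin 2) (j : Fin (K + 1)) :
    domainWall K (a, f) j = a + Fin.partialSum f j := rfl

lemma isingEnergy_domainWall (h₁ : ℝ) (a : Fin 2) (f : Fin K → Fin 2) :
    isingEnergy K h₁ (domainWall K (a, f)) = -(h₁ * spin a) - ∑ k, spin (f k) := by
  simp only [isingEnergy, domainWall_apply, Fin.partialSum_zero, add_zero, Fin.partialSum_succ,
    ← add_assoc, spin_add (_ + _), ← mul_assoc, spin_mul_self, one_mul]

lemma spin_partialSum (f : Fin K → Fin 2) (i : Fin (K + 1)) :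
    spin (Fin.partialSum f i) = ∏ k ∈ univ.filter fun k : Fin K => (k : ℕ) < i, spin (f k) := by
  induction i using Fin.induction with
  | zero => simp
  | succ j ih =>
    have hinsert : univ.filter (fun k : Fin K => (k : ℕ) < j.succ) =
        insert j (univ.filter fun k : Fin K => (k : ℕ) < j.castSucc) := by
      ext k
      simp only [mem_filter, mem_univ, true_and, mem_insert, Fin.ext_iff, Fin.val_succ,
        Fin.val_castSucc]
      omega
    rw [Fin.partialSum_succ, spin_add, ih, hinsert, prod_insert (by simp), mul_comm]

lemma exp_neg_mul_isingEnergy_domainWall (h₁ β : ℝ) (a : Fin 2) (f : Fin K → Fin 2) :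
    cexp (-β * isingEnergy K h₁ (domainWall K (a, f))) =
      cexp (↑(h₁ * β) * spin a) * ∏ k, cexp (β * spin (f k)) := by
  rw [isingEnergy_domainWall, ← exp_sum, ← exp_add, ← mul_sum]
  push_cast
  ring_nf

def isingPartition (K : ℕ) (h₁ β : ℝ) : ℂ := ∑ v, cexp (-β * isingEnergy K h₁ v)

lemma isingPartition_eq (K : ℕ) (h₁ β : ℝ) :
    isingPartition K h₁ β = 2 * cosh ↑(h₁ * β) * (2 * cosh β) ^ K := by
  rw [isingPartition, ← (domainWall K).sum_comp, Fintype.sum_prod_type]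
  simp_rw [exp_neg_mul_isingEnergy_domainWall, ← mul_sum, ← sum_mul, sum_exp_mul_spin]
  simpa using congrArg (2 * cosh ↑(h₁ * β) * ·)
    (sum_prod_spin_mul_prod_exp (∅ : Finset (Fin K)) β)

lemma isingPartition_ne_zero (K : ℕ) (h₁ β : ℝ) : isingPartition K h₁ β ≠ 0 := by
  have hcosh (x : ℝ) : cosh x ≠ 0 := by exact_mod_cast (Real.cosh_pos x).ne'
  rw [isingPartition_eq]
  exact mul_ne_zero (mul_ne_zero two_ne_zero (hcosh _))
    (pow_ne_zero _ (mul_ne_zero two_ne_zero (hcosh _)))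

lemma sum_spin_mul_exp_neg_mul_isingEnergy (h₁ β : ℝ) (i : Fin (K + 1)) :
    ∑ v, spin (v i) * cexp (-β * isingEnergy K h₁ v) =
      (Real.tanh (h₁ * β) * Real.tanh β ^ (i : ℕ)) * isingPartition K h₁ β := by
  rw [isingPartition_eq, ← (domainWall K).sum_comp, Fintype.sum_prod_type]
  simp_rw [exp_neg_mul_isingEnergy_domainWall, domainWall_apply, spin_add, spin_partialSum, mul_mul_mul_comm, ← mul_sum,
    ← sum_mul, sum_spin_mul_exp_mul_spin, sum_prod_spin_mul_prod_exp, Fin.card_filter_val_lt,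
    min_eq_right (Nat.le_of_lt_succ i.isLt), Fintype.card_fin]

end Chain

end ClassicalIsing

open ClassicalIsing in
theorem classical_ising_reduced_state (K : ℕ) (h₁ : ℝ) (β : ℝ) (i : Fin (K + 1)) :
    (Matrix.trace (NormedSpace.exp ((-(β : ℂ)) • classicalH K h₁)))⁻¹ •
        traceOut (fun j : Fin (K + 1) => j ≠ i)
          (NormedSpace.exp ((-(β : ℂ)) • classicalH K h₁)) =
      (1 / 2 : ℂ) • (1 : Matrix ({j : Fin (K + 1) // ¬ j ≠ i} → Fin 2)
          ({j : Fin (K + 1) // ¬ j ≠ i} → Fin 2) ℂ)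
        + ((1 / 2 : ℂ) * ((Real.tanh β : ℂ) ^ (i : ℕ)) * (Real.tanh (h₁ * β) : ℂ)) •
          pauliAt (⟨i, by simp⟩ : {j : Fin (K + 1) // ¬ j ≠ i}) σz := by
  rw [exp_smul_classicalH, trace_diagonal, traceOut_ne_diagonal,
    sum_spin_mul_exp_neg_mul_isingEnergy, ← isingPartition]
  have hZ := isingPartition_ne_zero K h₁ β
  rw [smul_smul, smul_add, smul_smul, smul_smul]
  congr 2 <;> field_simp
end
end

section
/- (Shielding on general lattices with single-site interface) Let Λ = X ∪ Y with X ∩ Y = {L} and no edges between X∖{L} and Y∖{L}. Let H = -∑_{⟨i,j⟩} J_{ij} σᵢ^z σ_j^z - ∑_i hᵢσᵢ^x - ∑_i gᵢσᵢ^y with h_L = g_L = 0. Then the reduced Gibbs state on Y equals exp(-βH″)/Tr exp(-βH″), where H″ collects only the terms of H supported in Y; in particular it is independent of all J_{ij}, hᵢ, gᵢ with i,j ∈ X∖{L}. -/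
open Matrix Complex

noncomputable section

set_option linter.unusedVariables false

namespace Shield

def flipF : Fin 2 → Fin 2 := fun x => x + 1

lemma flipF_inv : Function.Involutive flipF := fun x => by fin_cases x <;> rfl

def flipE : Fin 2 ≃ Fin 2 := flipF_inv.toPerm

lemma flipF_inj : Function.Injective flipF := flipF_inv.injective

lemma σz_flip (a b : Fin 2) : σz (flipF b) (flipF a) = - σz a b := by
  fin_cases a <;> fin_cases b <;> simp [σz, flipF]

lemma σx_flip (a b : Fin 2) : σx (flipF b) (flipF a) = σx a b := by
  fin_cases a <;> fin_cases b <;> simp [σx, flipF]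

lemma σy_flip (a b : Fin 2) : σy (flipF b) (flipF a) = σy a b := by
  fin_cases a <;> fin_cases b <;> simp [σy, flipF]

lemma σz_offdiag {a b : Fin 2} (h : a ≠ b) : σz a b = 0 := by
  fin_cases a <;> fin_cases b <;> simp_all [σz]

lemma σx_herm : σxᴴ = σx := by
  ext a b; fin_cases a <;> fin_cases b <;> simp [σx, conjTranspose_apply]

lemma σy_herm : σyᴴ = σy := by
  ext a b; fin_cases a <;> fin_cases b <;> simp [σy, conjTranspose_apply]

lemma σz_herm : σzᴴ = σz := by
  ext a b; fin_cases a <;> fin_cases b <;> simp [σz, conjTranspose_apply]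

end Shield

set_option linter.unusedSectionVars false

section Pauli

variable {ι : Type} [Fintype ι] [DecidableEq ι]

lemma pauliAt_conjTranspose (i : ι) (P : Matrix (Fin 2) (Fin 2) ℂ) :
    (pauliAt i P)ᴴ = pauliAt i Pᴴ := by
  ext v w
  simp only [conjTranspose_apply, pauliAt]
  by_cases h : ∀ j, j ≠ i → v j = w j
  · rw [if_pos fun j hj => (h j hj).symm, if_pos h]
  · rw [if_neg, if_neg h]
    · simp
    · intro hc; exact h fun j hj => (hc j hj).symm

lemma pauliAt_z_diagonal (i : ι) :
    pauliAt i σz = Matrix.diagonal (fun v => σz (v i) (v i)) := by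
  ext v w
  by_cases h : v = w
  · subst h; simp [pauliAt, Matrix.diagonal_apply_eq]
  · rw [Matrix.diagonal_apply_ne _ h]
    simp only [pauliAt]
    split_ifs with hc
    · have hne : v i ≠ w i := by
        intro he
        apply h
        funext j
        by_cases hj : j = i
        · subst hj; exact he
        · exact hc j hj
      exact Shield.σz_offdiag hne
    · rfl

lemma pauliAt_z_comm (i j : ι) :
    pauliAt i σz * pauliAt j σz = pauliAt j σz * pauliAt i σz := by
  rw [pauliAt_z_diagonal i, pauliAt_z_diagonal j, Matrix.diagonal_mul_diagonal,
    Matrix.diagonal_mul_diagonal]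
  exact congrArg Matrix.diagonal (funext fun v => mul_comm _ _)

end Pauli

namespace Shield

variable {κ : Type} [Fintype κ] [DecidableEq κ]

/-- flip every qubit -/
def flipPi (κ : Type) : (κ → Fin 2) ≃ (κ → Fin 2) := Equiv.piCongrRight fun _ => flipE

lemma flipPi_apply (x : κ → Fin 2) (k : κ) : flipPi κ x k = flipF (x k) := rfl

/-- `ε M = (Mᵀ) ∘ flip` , an antiautomorphism -/
def eps (M : Matrix (κ → Fin 2) (κ → Fin 2) ℂ) : Matrix (κ → Fin 2) (κ → Fin 2) ℂ :=
  (Mᵀ).submatrix (flipPi κ) (flipPi κ)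

lemma eps_apply (M : Matrix (κ → Fin 2) (κ → Fin 2) ℂ) (x y : κ → Fin 2) :
    eps M x y = M (flipPi κ y) (flipPi κ x) := rfl

lemma eps_add (M N : Matrix (κ → Fin 2) (κ → Fin 2) ℂ) : eps (M + N) = eps M + eps N := rfl

lemma eps_neg (M : Matrix (κ → Fin 2) (κ → Fin 2) ℂ) : eps (-M) = -eps M := rfl

lemma eps_sub (M N : Matrix (κ → Fin 2) (κ → Fin 2) ℂ) : eps (M - N) = eps M - eps N := rfl

lemma eps_smul (c : ℂ) (M : Matrix (κ → Fin 2) (κ → Fin 2) ℂ) : eps (c • M) = c • eps M := rfl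

lemma eps_sum {α : Type*} (s : Finset α) (f : α → Matrix (κ → Fin 2) (κ → Fin 2) ℂ) :
    eps (∑ a ∈ s, f a) = ∑ a ∈ s, eps (f a) := by
  ext x y
  simp only [eps_apply, Matrix.sum_apply]

lemma eps_mul (M N : Matrix (κ → Fin 2) (κ → Fin 2) ℂ) : eps (M * N) = eps N * eps M := by
  ext x y
  simp only [eps_apply, Matrix.mul_apply]
  rw [← Equiv.sum_comp (flipPi κ) (fun k => M (flipPi κ y) k * N k (flipPi κ x))]
  exact Finset.sum_congr rfl fun k _ => mul_comm _ _

lemma eps_pauliAt (i : κ) (P Q : Matrix (Fin 2) (Fin 2) ℂ)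
    (hPQ : ∀ a b, P (flipF b) (flipF a) = Q a b) :
    eps (pauliAt i P) = pauliAt i Q := by
  ext x y
  simp only [eps_apply, pauliAt]
  have hcond : (∀ j, j ≠ i → flipPi κ y j = flipPi κ x j) ↔ (∀ j, j ≠ i → x j = y j) := by
    constructor
    · intro hc j hj; exact (flipF_inj (hc j hj)).symm
    · intro hc j hj; rw [flipPi_apply, flipPi_apply, hc j hj]
  by_cases h : ∀ j, j ≠ i → x j = y j
  · rw [if_pos (hcond.mpr h), if_pos h, flipPi_apply, flipPi_apply, hPQ]
  · rw [if_neg (fun hc => h (hcond.mp hc)), if_neg h]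

lemma trace_eps (M : Matrix (κ → Fin 2) (κ → Fin 2) ℂ) : (eps M).trace = M.trace := by
  simp only [Matrix.trace, Matrix.diag, eps_apply]
  exact Fintype.sum_equiv (flipPi κ) _ _ fun x => rfl

end Shield

namespace Shield

section ExpLemmas

variable {n m : Type} [Fintype m] [DecidableEq m] [Fintype n] [DecidableEq n]

lemma exp_submatrix (e : n ≃ m) (M : Matrix m m ℂ) :
    NormedSpace.exp (M.submatrix e e) = (NormedSpace.exp M).submatrix e e := by
  letI : SeminormedRing (Matrix m m ℂ) := Matrix.linftyOpSemiNormedRing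
  letI : NormedRing (Matrix m m ℂ) := Matrix.linftyOpNormedRing
  letI : NormedAlgebra ℂ (Matrix m m ℂ) := Matrix.linftyOpNormedAlgebra
  letI : NormedAlgebra ℚ (Matrix m m ℂ) := Matrix.linftyOpNormedAlgebra
  letI : SeminormedRing (Matrix n n ℂ) := Matrix.linftyOpSemiNormedRing
  letI : NormedRing (Matrix n n ℂ) := Matrix.linftyOpNormedRing
  letI : NormedAlgebra ℂ (Matrix n n ℂ) := Matrix.linftyOpNormedAlgebra
  letI : NormedAlgebra ℚ (Matrix n n ℂ) := Matrix.linftyOpNormedAlgebra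
  have hfun : (Matrix.reindexAlgEquiv ℂ ℂ e.symm : Matrix m m ℂ → Matrix n n ℂ)
      = fun M => M.submatrix e e := by
    funext N
    simp [Matrix.reindexAlgEquiv_apply, Matrix.reindex_apply]
  have hcont : Continuous (Matrix.reindexAlgEquiv ℂ ℂ e.symm) := by
    rw [hfun]
    exact continuous_pi fun i => continuous_pi fun j =>
      ((continuous_apply (e j)).comp (continuous_apply (e i)))
  have h2 := NormedSpace.map_exp (Matrix.reindexAlgEquiv ℂ ℂ e.symm) hcont M
  rw [hfun] at h2
  exact h2.symm

lemma exp_eps {κ : Type} [Fintype κ] [DecidableEq κ] (M : Matrix (κ → Fin 2) (κ → Fin 2) ℂ) :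
    NormedSpace.exp (eps M) = eps (NormedSpace.exp M) := by
  rw [eps, exp_submatrix (flipPi κ) Mᵀ, Matrix.exp_transpose]
  rfl

lemma trace_exp_ne_zero [Nonempty n] {M : Matrix n n ℂ} (hM : M.IsHermitian) :
    Matrix.trace (NormedSpace.exp M) ≠ 0 := by
  set U : Matrix n n ℂ := (hM.eigenvectorUnitary : Matrix n n ℂ) with hU
  have h1 : U * star U = 1 := Unitary.coe_mul_star_self _
  have h2 : star U * U = 1 := Unitary.coe_star_mul_self _
  set y : (Matrix n n ℂ)ˣ := ⟨U, star U, h1, h2⟩ with hy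
  set D : Matrix n n ℂ := Matrix.diagonal (RCLike.ofReal ∘ hM.eigenvalues) with hD
  have hspec : M = (y : Matrix n n ℂ) * D * ((y⁻¹ : (Matrix n n ℂ)ˣ) : Matrix n n ℂ) :=
    hM.spectral_theorem
  rw [hspec, Matrix.exp_units_conj, Matrix.trace_units_conj, Matrix.exp_diagonal,
    Matrix.trace_diagonal]
  have hval : ∀ i, NormedSpace.exp (RCLike.ofReal ∘ hM.eigenvalues) i
      = ((Real.exp (hM.eigenvalues i) : ℝ) : ℂ) := by
    intro i
    rw [Pi.coe_exp, ← Complex.exp_eq_exp_ℂ]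
    exact (Complex.ofReal_exp _).symm
  rw [Finset.sum_congr rfl fun i _ => hval i, ← Complex.ofReal_sum]
  refine Complex.ofReal_ne_zero.mpr ?_
  have : (0:ℝ) < ∑ i, Real.exp (hM.eigenvalues i) :=
    Finset.sum_pos (fun i _ => Real.exp_pos _) Finset.univ_nonempty
  exact this.ne'

end ExpLemmas

end Shield

namespace Shield

section Kron

variable {α β : Type} [Fintype α] [DecidableEq α] [Fintype β] [DecidableEq β]

/-- `1 ⊗ K` -/
def oneK (K : Matrix β β ℂ) : Matrix (α × β) (α × β) ℂ :=
  (Matrix.blockDiagonal (fun _ : α => K)).submatrix (Equiv.prodComm α β) (Equiv.prodComm α β)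

lemma oneK_apply (K : Matrix β β ℂ) (x y : α × β) :
    oneK K x y = if x.1 = y.1 then K x.2 y.2 else 0 := by
  simp [oneK, Matrix.blockDiagonal_apply]

lemma oneK_mul (K K' : Matrix β β ℂ) :
    oneK (α := α) (K * K') = oneK (α := α) K * oneK (α := α) K' := by
  unfold oneK
  rw [Matrix.submatrix_mul_equiv]
  exact congrArg (fun M => M.submatrix (Equiv.prodComm α β) (Equiv.prodComm α β))
    (Matrix.blockDiagonal_mul (fun _ : α => K) (fun _ : α => K'))

lemma exp_oneK (K : Matrix β β ℂ) :
    NormedSpace.exp (oneK (α := α) K) = oneK (NormedSpace.exp K) := by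
  letI : SeminormedRing (Matrix β β ℂ) := Matrix.linftyOpSemiNormedRing
  letI : NormedRing (Matrix β β ℂ) := Matrix.linftyOpNormedRing
  letI : NormedAlgebra ℂ (Matrix β β ℂ) := Matrix.linftyOpNormedAlgebra
  letI : NormedAlgebra ℚ (Matrix β β ℂ) := Matrix.linftyOpNormedAlgebra
  rw [oneK, exp_submatrix, Matrix.exp_blockDiagonal]
  erw [Pi.exp_def]
  rfl

lemma exp_bd (F : β → Matrix α α ℂ) :
    NormedSpace.exp (Matrix.blockDiagonal F)
      = Matrix.blockDiagonal (fun s => NormedSpace.exp (F s)) := by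
  letI : SeminormedRing (Matrix α α ℂ) := Matrix.linftyOpSemiNormedRing
  letI : NormedRing (Matrix α α ℂ) := Matrix.linftyOpNormedRing
  letI : NormedAlgebra ℂ (Matrix α α ℂ) := Matrix.linftyOpNormedAlgebra
  letI : NormedAlgebra ℚ (Matrix α α ℂ) := Matrix.linftyOpNormedAlgebra
  rw [Matrix.exp_blockDiagonal]
  erw [Pi.exp_def]
  rfl

lemma bd_mul_oneK (F : β → Matrix α α ℂ) (K : Matrix β β ℂ) (x y : α × β) :
    (Matrix.blockDiagonal F * oneK (α := α) K) x y = F x.2 x.1 y.1 * K x.2 y.2 := by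
  rw [Matrix.mul_apply, Fintype.sum_prod_type]
  simp only [Matrix.blockDiagonal_apply, oneK_apply, ite_mul, mul_ite, zero_mul, mul_zero]
  rw [Finset.sum_comm]
  simp [Finset.sum_ite_eq, Finset.sum_ite_eq']

lemma oneK_mul_bd (F : β → Matrix α α ℂ) (K : Matrix β β ℂ) (x y : α × β) :
    (oneK (α := α) K * Matrix.blockDiagonal F) x y = F y.2 x.1 y.1 * K x.2 y.2 := by
  rw [Matrix.mul_apply, Fintype.sum_prod_type]
  simp only [Matrix.blockDiagonal_apply, oneK_apply, ite_mul, mul_ite, zero_mul, mul_zero]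
  simp [Finset.sum_ite_eq, Finset.sum_ite_eq']
  ring

lemma bd_oneK_comm (F : β → Matrix α α ℂ) (K : Matrix β β ℂ)
    (hFK : ∀ s s', K s s' ≠ 0 → F s = F s') :
    Matrix.blockDiagonal F * oneK (α := α) K = oneK (α := α) K * Matrix.blockDiagonal F := by
  ext x y
  rw [bd_mul_oneK, oneK_mul_bd]
  by_cases hK : K x.2 y.2 = 0
  · rw [hK, mul_zero, mul_zero]
  · rw [hFK _ _ hK]

end Kron

section Split

variable {V : Type} [Fintype V] [DecidableEq V] (p : V → Prop) [DecidablePred p]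

def eqv : (V → Fin 2) ≃ ({i // p i} → Fin 2) × ({i // ¬p i} → Fin 2) :=
  Equiv.piEquivPiSubtypeProd p fun _ => Fin 2

def merge (u : {i // p i} → Fin 2) (s : {i // ¬p i} → Fin 2) : V → Fin 2 :=
  fun i => if h : p i then u ⟨i, h⟩ else s ⟨i, h⟩

lemma eqv_merge (u : {i // p i} → Fin 2) (s : {i // ¬p i} → Fin 2) :
    eqv p (merge p u s) = (u, s) := by
  unfold eqv merge Equiv.piEquivPiSubtypeProd
  ext i
  · simp [i.2]
  · simp [i.2]

def ΦM (F : ({i // ¬p i} → Fin 2) → Matrix ({i // p i} → Fin 2) ({i // p i} → Fin 2) ℂ) :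
    Matrix (V → Fin 2) (V → Fin 2) ℂ :=
  (Matrix.blockDiagonal F).submatrix (eqv p) (eqv p)

def ΨM (K : Matrix ({i // ¬p i} → Fin 2) ({i // ¬p i} → Fin 2) ℂ) :
    Matrix (V → Fin 2) (V → Fin 2) ℂ :=
  (oneK K).submatrix (eqv p) (eqv p)

lemma exp_ΦM (F : ({i // ¬p i} → Fin 2) → Matrix ({i // p i} → Fin 2) ({i // p i} → Fin 2) ℂ) :
    NormedSpace.exp (ΦM p F) = ΦM p (fun s => NormedSpace.exp (F s)) := by
  rw [ΦM, exp_submatrix, exp_bd, ΦM]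

lemma exp_ΨM (K : Matrix ({i // ¬p i} → Fin 2) ({i // ¬p i} → Fin 2) ℂ) :
    NormedSpace.exp (ΨM p K) = ΨM p (NormedSpace.exp K) := by
  rw [ΨM, exp_submatrix, exp_oneK, ΨM]

lemma trace_submatrix_eqv {κ : Type} [Fintype κ] (e : (V → Fin 2) ≃ κ) (N : Matrix κ κ ℂ) :
    (N.submatrix e e).trace = N.trace := by
  simp only [Matrix.trace, Matrix.diag, Matrix.submatrix_apply]
  exact Fintype.sum_equiv e _ _ fun x => rfl

end Split

end Shield

namespace Shield

section Split2

variable {V : Type} [Fintype V] [DecidableEq V] (p : V → Prop) [DecidablePred p]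

lemma traceOut_formula
    (N : Matrix (({i // p i} → Fin 2) × ({i // ¬p i} → Fin 2))
      (({i // p i} → Fin 2) × ({i // ¬p i} → Fin 2)) ℂ) :
    traceOut p (N.submatrix (eqv p) (eqv p))
      = fun s s' => ∑ u : {i // p i} → Fin 2, N (u, s) (u, s') := by
  funext s s'
  simp only [traceOut, Matrix.submatrix_apply]
  refine Finset.sum_congr rfl fun u _ => ?_
  have h1 : eqv p (fun i => if h : p i then u ⟨i, h⟩ else s ⟨i, h⟩) = (u, s) :=
    eqv_merge p u s
  have h2 : eqv p (fun i => if h : p i then u ⟨i, h⟩ else s' ⟨i, h⟩) = (u, s') :=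
    eqv_merge p u s'
  rw [h1, h2]

end Split2

end Shield

namespace Shield

section Key

variable {V : Type} [Fintype V] [DecidableEq V] (p : V → Prop) [DecidablePred p]

theorem key (HA : Fin 2 → Matrix ({i // p i} → Fin 2) ({i // p i} → Fin 2) ℂ)
    (K : Matrix ({i // ¬p i} → Fin 2) ({i // ¬p i} → Fin 2) ℂ)
    (Ls : {i // ¬p i})
    (Hfull : Matrix (V → Fin 2) (V → Fin 2) ℂ)
    (hfull : Hfull = ΦM p (fun s => HA (s Ls)) + ΨM p K)
    (hKdiag : ∀ s s', s Ls ≠ s' Ls → K s s' = 0)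
    (htr : (NormedSpace.exp (HA 0)).trace = (NormedSpace.exp (HA 1)).trace)
    (hne : (NormedSpace.exp (HA 0)).trace ≠ 0) :
    (Matrix.trace (NormedSpace.exp Hfull))⁻¹ • traceOut p (NormedSpace.exp Hfull)
      = (Matrix.trace (NormedSpace.exp K))⁻¹ • NormedSpace.exp K := by
  classical
  set F : ({i // ¬p i} → Fin 2) → Matrix ({i // p i} → Fin 2) ({i // p i} → Fin 2) ℂ :=
    fun s => HA (s Ls) with hF
  have hFK : ∀ s s', K s s' ≠ 0 → F s = F s' := by
    intro s s' hK
    by_cases h : s Ls = s' Ls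
    · rw [hF]; simp only [h]
    · exact absurd (hKdiag s s' h) hK
  have hcomm : Commute (ΦM p F) (ΨM p K) := by
    unfold Commute SemiconjBy ΦM ΨM
    rw [Matrix.submatrix_mul_equiv, Matrix.submatrix_mul_equiv,
      bd_oneK_comm F K hFK]
  have hexp : NormedSpace.exp Hfull
      = ((Matrix.blockDiagonal fun s => NormedSpace.exp (F s))
          * oneK (α := {i // p i} → Fin 2) (NormedSpace.exp K)).submatrix (eqv p) (eqv p) := by
    rw [hfull, Matrix.exp_add_of_commute _ _ hcomm, exp_ΦM, exp_ΨM, ΦM, ΨM,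
      Matrix.submatrix_mul_equiv]
  have hconst : ∀ s : {i // ¬p i} → Fin 2,
      (NormedSpace.exp (F s)).trace = (NormedSpace.exp (HA 0)).trace := by
    intro s
    show (NormedSpace.exp (HA (s Ls))).trace = (NormedSpace.exp (HA 0)).trace
    have h01 : s Ls = 0 ∨ s Ls = 1 := by omega
    rcases h01 with h | h
    · rw [h]
    · rw [h, htr]
  set c := (NormedSpace.exp (HA 0)).trace with hc
  have htrOut : traceOut p (NormedSpace.exp Hfull) = c • NormedSpace.exp K := by
    rw [hexp, traceOut_formula]
    funext s s'
    calc ∑ u : {i // p i} → Fin 2,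
        ((Matrix.blockDiagonal fun t => NormedSpace.exp (F t))
            * oneK (α := {i // p i} → Fin 2) (NormedSpace.exp K)) (u, s) (u, s')
        = ∑ u : {i // p i} → Fin 2,
            NormedSpace.exp (F s) u u * NormedSpace.exp K s s' :=
          Finset.sum_congr rfl fun u _ => bd_mul_oneK _ _ _ _
      _ = (NormedSpace.exp (F s)).trace * NormedSpace.exp K s s' := by
          rw [← Finset.sum_mul]; rfl
      _ = c * NormedSpace.exp K s s' := by rw [hconst s]
      _ = (c • NormedSpace.exp K) s s' := rfl
  have htrace : (NormedSpace.exp Hfull).trace = c * (NormedSpace.exp K).trace := by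
    rw [hexp, trace_submatrix_eqv, Matrix.trace, Fintype.sum_prod_type]
    calc ∑ u : {i // p i} → Fin 2, ∑ s : {i // ¬p i} → Fin 2,
          ((Matrix.blockDiagonal fun t => NormedSpace.exp (F t))
            * oneK (α := {i // p i} → Fin 2) (NormedSpace.exp K)).diag (u, s)
        = ∑ u : {i // p i} → Fin 2, ∑ s : {i // ¬p i} → Fin 2,
            NormedSpace.exp (F s) u u * NormedSpace.exp K s s := by
          refine Finset.sum_congr rfl fun u _ => Finset.sum_congr rfl fun s _ => ?_
          rw [Matrix.diag_apply, bd_mul_oneK]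
      _ = ∑ s : {i // ¬p i} → Fin 2, ∑ u : {i // p i} → Fin 2,
            NormedSpace.exp (F s) u u * NormedSpace.exp K s s := Finset.sum_comm
      _ = ∑ s : {i // ¬p i} → Fin 2, c * NormedSpace.exp K s s := by
          refine Finset.sum_congr rfl fun s _ => ?_
          rw [← Finset.sum_mul, ← hconst s]; rfl
      _ = c * (NormedSpace.exp K).trace := by
          rw [← Finset.mul_sum]; rfl
  rw [htrOut, htrace, smul_smul, mul_inv, mul_comm c⁻¹, mul_assoc,
    inv_mul_cancel₀ hne, mul_one]

end Key

end Shield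

namespace Shield

section Block

variable {A : Type} [Fintype A] [DecidableEq A]
variable (JAA : A → A → ℝ) (JL JR hh gg : A → ℝ)

def Hb (l : Fin 2) : Matrix (A → Fin 2) (A → Fin 2) ℂ :=
  -( (∑ i, ∑ j, (JAA i j : ℂ) • (pauliAt i σz * pauliAt j σz))
    + (∑ i, (JL i : ℂ) • (pauliAt i σz * ((σz l l) • (1 : Matrix (A → Fin 2) (A → Fin 2) ℂ))))
    + (∑ i, (JR i : ℂ) • (((σz l l) • (1 : Matrix (A → Fin 2) (A → Fin 2) ℂ)) * pauliAt i σz)) )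
  - ∑ i, (hh i : ℂ) • pauliAt i σx
  - ∑ i, (gg i : ℂ) • pauliAt i σy

lemma eps_one : eps (1 : Matrix (A → Fin 2) (A → Fin 2) ℂ) = 1 := by
  ext x y
  rw [eps_apply, Matrix.one_apply, Matrix.one_apply]
  by_cases h : x = y
  · subst h; rw [if_pos rfl, if_pos rfl]
  · rw [if_neg h, if_neg (fun hc => h ((flipPi A).injective hc).symm)]

lemma eps_pauli_z (i : A) : eps (pauliAt i σz) = -(pauliAt i σz) := by
  have := eps_pauliAt i σz (-σz) (fun a b => by rw [σz_flip a b]; rfl)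
  rw [this]
  ext v w
  simp only [pauliAt, Matrix.neg_apply]
  split_ifs <;> simp [σz]

lemma eps_pauli_x (i : A) : eps (pauliAt i σx) = pauliAt i σx :=
  eps_pauliAt i σx σx σx_flip

lemma eps_pauli_y (i : A) : eps (pauliAt i σy) = pauliAt i σy :=
  eps_pauliAt i σy σy σy_flip

lemma σz_diag_flip (l : Fin 2) : σz (flipF l) (flipF l) = -σz l l := σz_flip l l

lemma eps_Hb (l : Fin 2) : eps (Hb JAA JL JR hh gg l) = Hb JAA JL JR hh gg (flipF l) := by
  have hA1 : eps (∑ i, ∑ j, (JAA i j : ℂ) • (pauliAt i σz * pauliAt j σz))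
      = ∑ i, ∑ j, (JAA i j : ℂ) • (pauliAt i σz * pauliAt j σz) := by
    rw [eps_sum]
    refine Finset.sum_congr rfl fun i _ => ?_
    rw [eps_sum]
    refine Finset.sum_congr rfl fun j _ => ?_
    rw [eps_smul, eps_mul, eps_pauli_z, eps_pauli_z, neg_mul_neg, pauliAt_z_comm]
  have hA2 : eps (∑ i, (JL i : ℂ) • (pauliAt i σz * ((σz l l) • (1 : Matrix (A → Fin 2) (A → Fin 2) ℂ))))
      = ∑ i, (JL i : ℂ) • (pauliAt i σz * ((σz (flipF l) (flipF l)) • (1 : Matrix (A → Fin 2) (A → Fin 2) ℂ))) := by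
    rw [eps_sum]
    refine Finset.sum_congr rfl fun i _ => ?_
    rw [eps_smul, eps_mul, eps_smul, eps_one, eps_pauli_z, σz_diag_flip]
    simp [smul_mul_assoc, mul_smul_comm, neg_smul, smul_neg, neg_mul, mul_neg, one_mul, mul_one]
  have hA3 : eps (∑ i, (JR i : ℂ) • (((σz l l) • (1 : Matrix (A → Fin 2) (A → Fin 2) ℂ)) * pauliAt i σz))
      = ∑ i, (JR i : ℂ) • (((σz (flipF l) (flipF l)) • (1 : Matrix (A → Fin 2) (A → Fin 2) ℂ)) * pauliAt i σz) := by
    rw [eps_sum]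
    refine Finset.sum_congr rfl fun i _ => ?_
    rw [eps_smul, eps_mul, eps_smul, eps_one, eps_pauli_z, σz_diag_flip]
    simp [smul_mul_assoc, mul_smul_comm, neg_smul, smul_neg, neg_mul, mul_neg, one_mul, mul_one]
  have hX : eps (∑ i, (hh i : ℂ) • pauliAt i σx) = ∑ i, (hh i : ℂ) • pauliAt i σx := by
    rw [eps_sum]
    refine Finset.sum_congr rfl fun i _ => ?_
    rw [eps_smul, eps_pauli_x]
  have hY : eps (∑ i, (gg i : ℂ) • pauliAt i σy) = ∑ i, (gg i : ℂ) • pauliAt i σy := by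
    rw [eps_sum]
    refine Finset.sum_congr rfl fun i _ => ?_
    rw [eps_smul, eps_pauli_y]
  unfold Hb
  rw [eps_sub, eps_sub, eps_neg, eps_add, eps_add, hA1, hA2, hA3, hX, hY]

lemma σz_diag_star (l : Fin 2) : star (σz l l) = σz l l := by
  fin_cases l <;> simp [σz]

lemma Hb_herm (β : ℝ) (l : Fin 2) : ((-(β : ℂ)) • Hb JAA JL JR hh gg l).IsHermitian := by
  unfold Matrix.IsHermitian
  rw [Matrix.conjTranspose_smul]
  have hstarβ : star (-(β:ℂ)) = -(β:ℂ) := by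
    rw [star_neg, Complex.star_def, Complex.conj_ofReal]
  rw [hstarβ]
  congr 1
  have hA1 : (∑ i, ∑ j, (JAA i j : ℂ) • (pauliAt i σz * pauliAt j σz))ᴴ
      = ∑ i, ∑ j, (JAA i j : ℂ) • (pauliAt i σz * pauliAt j σz) := by
    rw [Matrix.conjTranspose_sum]
    refine Finset.sum_congr rfl fun i _ => ?_
    rw [Matrix.conjTranspose_sum]
    refine Finset.sum_congr rfl fun j _ => ?_
    rw [Matrix.conjTranspose_smul, Matrix.conjTranspose_mul,
      pauliAt_conjTranspose, pauliAt_conjTranspose, σz_herm, pauliAt_z_comm,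
      Complex.star_def, Complex.conj_ofReal]
  have hmix : ∀ P : Matrix (A → Fin 2) (A → Fin 2) ℂ,
      ((σz l l) • (1 : Matrix (A → Fin 2) (A → Fin 2) ℂ)) * P
        = P * ((σz l l) • (1 : Matrix (A → Fin 2) (A → Fin 2) ℂ)) := by
    intro P
    rw [smul_mul_assoc, one_mul, mul_smul_comm, mul_one]
  have hA2 : (∑ i, (JL i : ℂ) • (pauliAt i σz * ((σz l l) • (1 : Matrix (A → Fin 2) (A → Fin 2) ℂ))))ᴴ
      = ∑ i, (JL i : ℂ) • (pauliAt i σz * ((σz l l) • (1 : Matrix (A → Fin 2) (A → Fin 2) ℂ))) := by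
    rw [Matrix.conjTranspose_sum]
    refine Finset.sum_congr rfl fun i _ => ?_
    rw [Matrix.conjTranspose_smul, Matrix.conjTranspose_mul, Matrix.conjTranspose_smul,
      Matrix.conjTranspose_one, pauliAt_conjTranspose, σz_herm, σz_diag_star,
      Complex.star_def, Complex.conj_ofReal, hmix]
  have hA3 : (∑ i, (JR i : ℂ) • (((σz l l) • (1 : Matrix (A → Fin 2) (A → Fin 2) ℂ)) * pauliAt i σz))ᴴ
      = ∑ i, (JR i : ℂ) • (((σz l l) • (1 : Matrix (A → Fin 2) (A → Fin 2) ℂ)) * pauliAt i σz) := by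
    rw [Matrix.conjTranspose_sum]
    refine Finset.sum_congr rfl fun i _ => ?_
    rw [Matrix.conjTranspose_smul, Matrix.conjTranspose_mul, Matrix.conjTranspose_smul,
      Matrix.conjTranspose_one, pauliAt_conjTranspose, σz_herm, σz_diag_star,
      Complex.star_def, Complex.conj_ofReal, hmix]
  have hX : (∑ i, (hh i : ℂ) • pauliAt i σx)ᴴ = ∑ i, (hh i : ℂ) • pauliAt i σx := by
    rw [Matrix.conjTranspose_sum]
    refine Finset.sum_congr rfl fun i _ => ?_
    rw [Matrix.conjTranspose_smul, pauliAt_conjTranspose, σx_herm,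
      Complex.star_def, Complex.conj_ofReal]
  have hY : (∑ i, (gg i : ℂ) • pauliAt i σy)ᴴ = ∑ i, (gg i : ℂ) • pauliAt i σy := by
    rw [Matrix.conjTranspose_sum]
    refine Finset.sum_congr rfl fun i _ => ?_
    rw [Matrix.conjTranspose_smul, pauliAt_conjTranspose, σy_herm,
      Complex.star_def, Complex.conj_ofReal]
  unfold Hb
  rw [Matrix.conjTranspose_sub, Matrix.conjTranspose_sub, Matrix.conjTranspose_neg,
    Matrix.conjTranspose_add, Matrix.conjTranspose_add, hA1, hA2, hA3, hX, hY]

lemma flipF_zero : flipF 0 = 1 := rfl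

lemma trace_exp_Hb_eq (β : ℝ) :
    (NormedSpace.exp ((-(β:ℂ)) • Hb JAA JL JR hh gg 0)).trace
      = (NormedSpace.exp ((-(β:ℂ)) • Hb JAA JL JR hh gg 1)).trace := by
  have h1 : (-(β:ℂ)) • Hb JAA JL JR hh gg 1 = eps ((-(β:ℂ)) • Hb JAA JL JR hh gg 0) := by
    rw [eps_smul, eps_Hb, flipF_zero]
  rw [h1, exp_eps, trace_eps]

lemma trace_exp_Hb_ne (β : ℝ) :
    (NormedSpace.exp ((-(β:ℂ)) • Hb JAA JL JR hh gg 0)).trace ≠ 0 :=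
  trace_exp_ne_zero (Hb_herm JAA JL JR hh gg β 0)

end Block

end Shield

namespace Shield

section Maps

variable {V : Type} [Fintype V] [DecidableEq V] (p : V → Prop) [DecidablePred p]

lemma eqv_fst (v : V → Fin 2) : (eqv p v).1 = fun k : {i // p i} => v ↑k := rfl
lemma eqv_snd (v : V → Fin 2) : (eqv p v).2 = fun k : {i // ¬p i} => v ↑k := rfl

lemma ΦM_apply (F : ({i // ¬p i} → Fin 2) → Matrix ({i // p i} → Fin 2) ({i // p i} → Fin 2) ℂ)
    (v w : V → Fin 2) :
    ΦM p F v w = if (fun k : {i // ¬p i} => v ↑k) = (fun k : {i // ¬p i} => w ↑k)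
      then F (fun k : {i // ¬p i} => v ↑k) (fun k : {i // p i} => v ↑k) (fun k : {i // p i} => w ↑k)
      else 0 := by
  rw [ΦM, Matrix.submatrix_apply, Matrix.blockDiagonal_apply]
  rfl

lemma ΨM_apply (K : Matrix ({i // ¬p i} → Fin 2) ({i // ¬p i} → Fin 2) ℂ) (v w : V → Fin 2) :
    ΨM p K v w = if (fun k : {i // p i} => v ↑k) = (fun k : {i // p i} => w ↑k)
      then K (fun k : {i // ¬p i} => v ↑k) (fun k : {i // ¬p i} => w ↑k)
      else 0 := by
  rw [ΨM, Matrix.submatrix_apply, oneK_apply]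
  rfl

lemma funsplit_eq {v w : V → Fin 2}
    (h1 : (fun k : {i // p i} => v ↑k) = (fun k : {i // p i} => w ↑k))
    (h2 : (fun k : {i // ¬p i} => v ↑k) = (fun k : {i // ¬p i} => w ↑k)) : v = w := by
  funext j
  by_cases hpj : p j
  · exact congrFun h1 ⟨j, hpj⟩
  · exact congrFun h2 ⟨j, hpj⟩

lemma ΦM_pauli (i : {i // p i}) (P : Matrix (Fin 2) (Fin 2) ℂ) :
    ΦM p (fun _ => pauliAt i P) = pauliAt (i : V) P := by
  funext v w
  rw [ΦM_apply]
  simp only [pauliAt]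
  by_cases hv : ∀ j : V, j ≠ ↑i → v j = w j
  · rw [if_pos hv, if_pos, if_pos]
    · intro j hj
      exact hv ↑j fun hh => hj (Subtype.ext hh)
    · funext k
      exact hv ↑k (fun hh : (k : V) = ↑i => k.2 (hh ▸ i.2))
  · rw [if_neg hv]
    by_cases hS : (fun k : {i // ¬p i} => v ↑k) = (fun k : {i // ¬p i} => w ↑k)
    · rw [if_pos hS, if_neg]
      intro hA
      apply hv
      intro j hj
      by_cases hpj : p j
      · exact hA ⟨j, hpj⟩ fun he => hj (congrArg Subtype.val he)
      · exact congrFun hS ⟨j, hpj⟩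
    · rw [if_neg hS]

lemma ΨM_pauli (i : {i // ¬p i}) (P : Matrix (Fin 2) (Fin 2) ℂ) :
    ΨM p (pauliAt i P) = pauliAt (i : V) P := by
  funext v w
  rw [ΨM_apply]
  simp only [pauliAt]
  by_cases hv : ∀ j : V, j ≠ ↑i → v j = w j
  · rw [if_pos hv, if_pos, if_pos]
    · intro j hj
      exact hv ↑j fun hh => hj (Subtype.ext hh)
    · funext k
      refine hv ↑k (fun hh : (k : V) = ↑i => ?_)
      exact i.2 (hh ▸ k.2)
  · rw [if_neg hv]
    by_cases hS : (fun k : {i // p i} => v ↑k) = (fun k : {i // p i} => w ↑k)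
    · rw [if_pos hS, if_neg]
      intro hA
      apply hv
      intro j hj
      by_cases hpj : p j
      · exact congrFun hS ⟨j, hpj⟩
      · exact hA ⟨j, hpj⟩ fun he => hj (congrArg Subtype.val he)
    · rw [if_neg hS]

lemma ΦM_zL (Ls : {i // ¬p i}) :
    ΦM p (fun s => (σz (s Ls) (s Ls))
        • (1 : Matrix ({i // p i} → Fin 2) ({i // p i} → Fin 2) ℂ))
      = pauliAt (Ls : V) σz := by
  funext v w
  rw [ΦM_apply]
  simp only [pauliAt, Matrix.smul_apply, Matrix.one_apply, smul_eq_mul, mul_ite, mul_one,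
    mul_zero]
  by_cases hvw : v = w
  · subst hvw
    rw [if_pos rfl, if_pos rfl, if_pos fun j _ => rfl]
  · by_cases hS : (fun k : {i // ¬p i} => v ↑k) = (fun k : {i // ¬p i} => w ↑k)
    · have hVf : ¬(∀ j : V, j ≠ ↑Ls → v j = w j) := by
        intro hV
        apply hvw
        funext j
        by_cases hj : j = ↑Ls
        · subst hj; exact congrFun hS Ls
        · exact hV j hj
      rw [if_pos hS, if_neg hVf, if_neg]
      intro hP
      exact hvw (funsplit_eq p hP hS)
    · rw [if_neg hS]
      by_cases hV : ∀ j : V, j ≠ ↑Ls → v j = w j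
      · rw [if_pos hV]
        have hne : v ↑Ls ≠ w ↑Ls := by
          intro he
          apply hvw
          funext j
          by_cases hj : j = ↑Ls
          · subst hj; exact he
          · exact hV j hj
        exact (σz_offdiag hne).symm
      · rw [if_neg hV]

lemma ΦM_add (F G : ({i // ¬p i} → Fin 2) → Matrix ({i // p i} → Fin 2) ({i // p i} → Fin 2) ℂ) :
    ΦM p (fun s => F s + G s) = ΦM p F + ΦM p G := by
  funext v w
  simp only [ΦM_apply, Matrix.add_apply]
  split_ifs <;> simp

lemma ΦM_neg (F : ({i // ¬p i} → Fin 2) → Matrix ({i // p i} → Fin 2) ({i // p i} → Fin 2) ℂ) :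
    ΦM p (fun s => -(F s)) = -(ΦM p F) := by
  funext v w
  simp only [ΦM_apply, Matrix.neg_apply]
  split_ifs <;> simp

lemma ΦM_sub (F G : ({i // ¬p i} → Fin 2) → Matrix ({i // p i} → Fin 2) ({i // p i} → Fin 2) ℂ) :
    ΦM p (fun s => F s - G s) = ΦM p F - ΦM p G := by
  funext v w
  simp only [ΦM_apply, Matrix.sub_apply]
  split_ifs <;> simp

lemma ΦM_smul (c : ℂ)
    (F : ({i // ¬p i} → Fin 2) → Matrix ({i // p i} → Fin 2) ({i // p i} → Fin 2) ℂ) :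
    ΦM p (fun s => c • F s) = c • ΦM p F := by
  funext v w
  simp only [ΦM_apply, Matrix.smul_apply]
  split_ifs <;> simp

lemma ΦM_sum {α : Type*} (t : Finset α)
    (f : α → ({i // ¬p i} → Fin 2) → Matrix ({i // p i} → Fin 2) ({i // p i} → Fin 2) ℂ) :
    ΦM p (fun s => ∑ a ∈ t, f a s) = ∑ a ∈ t, ΦM p (f a) := by
  funext v w
  simp only [ΦM_apply, Matrix.sum_apply]
  split_ifs <;> simp

lemma ΦM_mul (F G : ({i // ¬p i} → Fin 2) → Matrix ({i // p i} → Fin 2) ({i // p i} → Fin 2) ℂ) :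
    ΦM p (fun s => F s * G s) = ΦM p F * ΦM p G := by
  unfold ΦM
  rw [Matrix.submatrix_mul_equiv]
  exact congrArg (fun M => M.submatrix (eqv p) (eqv p)) (Matrix.blockDiagonal_mul F G)

lemma ΨM_add (K K' : Matrix ({i // ¬p i} → Fin 2) ({i // ¬p i} → Fin 2) ℂ) :
    ΨM p (K + K') = ΨM p K + ΨM p K' := by
  funext v w
  simp only [ΨM_apply, Matrix.add_apply]
  split_ifs <;> simp

lemma ΨM_neg (K : Matrix ({i // ¬p i} → Fin 2) ({i // ¬p i} → Fin 2) ℂ) :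
    ΨM p (-K) = -(ΨM p K) := by
  funext v w
  simp only [ΨM_apply, Matrix.neg_apply]
  split_ifs <;> simp

lemma ΨM_sub (K K' : Matrix ({i // ¬p i} → Fin 2) ({i // ¬p i} → Fin 2) ℂ) :
    ΨM p (K - K') = ΨM p K - ΨM p K' := by
  funext v w
  simp only [ΨM_apply, Matrix.sub_apply]
  split_ifs <;> simp

lemma ΨM_smul (c : ℂ) (K : Matrix ({i // ¬p i} → Fin 2) ({i // ¬p i} → Fin 2) ℂ) :
    ΨM p (c • K) = c • ΨM p K := by
  funext v w
  simp only [ΨM_apply, Matrix.smul_apply]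
  split_ifs <;> simp

lemma ΨM_sum {α : Type*} (t : Finset α)
    (f : α → Matrix ({i // ¬p i} → Fin 2) ({i // ¬p i} → Fin 2) ℂ) :
    ΨM p (∑ a ∈ t, f a) = ∑ a ∈ t, ΨM p (f a) := by
  funext v w
  simp only [ΨM_apply, Matrix.sum_apply]
  split_ifs <;> simp

lemma ΨM_mul (K K' : Matrix ({i // ¬p i} → Fin 2) ({i // ¬p i} → Fin 2) ℂ) :
    ΨM p (K * K') = ΨM p K * ΨM p K' := by
  unfold ΨM
  rw [Matrix.submatrix_mul_equiv]
  exact congrArg (fun M => M.submatrix (eqv p) (eqv p)) (oneK_mul K K')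

end Maps

end Shield

open Shield in
theorem shielding_general_lattice_single_site_interface
    (V : Type) [Fintype V] [DecidableEq V]
    (X Y : Finset V) (L : V)
    (hunion : X ∪ Y = Finset.univ) (hinter : X ∩ Y = {L})
    (J : V → V → ℝ) (h g : V → ℝ)
    (hedge : ∀ i j : V, i ∈ X → i ≠ L → j ∈ Y → j ≠ L → J i j = 0 ∧ J j i = 0)
    (hhL : h L = 0) (hgL : g L = 0) (β : ℝ)
    -- the full Hamiltonian `H`
    (H : Matrix (V → Fin 2) (V → Fin 2) ℂ)
    (hH : H = -∑ i : V, ∑ j : V, (J i j : ℂ) • (pauliAt i σz * pauliAt j σz)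
        - ∑ i : V, (h i : ℂ) • pauliAt i σx
        - ∑ i : V, (g i : ℂ) • pauliAt i σy)
    -- the Hamiltonian `H″` collecting the terms of `H` supported in `Y`
    (H'' : Matrix ({i : V // ¬ (i ∈ X ∧ i ≠ L)} → Fin 2)
        ({i : V // ¬ (i ∈ X ∧ i ≠ L)} → Fin 2) ℂ)
    (hH'' : H'' = -∑ i : {i : V // ¬ (i ∈ X ∧ i ≠ L)}, ∑ j : {i : V // ¬ (i ∈ X ∧ i ≠ L)},
          (J i j : ℂ) • (pauliAt i σz * pauliAt j σz)
        - ∑ i : {i : V // ¬ (i ∈ X ∧ i ≠ L)}, (h i : ℂ) • pauliAt i σx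
        - ∑ i : {i : V // ¬ (i ∈ X ∧ i ≠ L)}, (g i : ℂ) • pauliAt i σy) :
    (Matrix.trace (NormedSpace.exp ((-(β : ℂ)) • H)))⁻¹ •
        traceOut (fun i : V => i ∈ X ∧ i ≠ L) (NormedSpace.exp ((-(β : ℂ)) • H)) =
      (Matrix.trace (NormedSpace.exp ((-(β : ℂ)) • H'')))⁻¹ •
        NormedSpace.exp ((-(β : ℂ)) • H'') := by
  set p : V → Prop := fun i : V => i ∈ X ∧ i ≠ L with hp
  have hLnp : ¬ p L := fun hc => hc.2 rfl
  set Ls : {i : V // ¬ p i} := ⟨L, hLnp⟩ with hLs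
  -- J vanishing facts
  have hJ0 : ∀ (i : {i // p i}) (j : {i // ¬ p i}), (j : V) ≠ L →
      J ↑i ↑j = 0 ∧ J ↑j ↑i = 0 := by
    intro i j hjL
    have hjX : (j : V) ∉ X := fun hx => j.2 ⟨hx, hjL⟩
    have hjY : (j : V) ∈ Y := by
      have hm : (j : V) ∈ X ∪ Y := by rw [hunion]; exact Finset.mem_univ _
      rcases Finset.mem_union.mp hm with hc | hc
      · exact absurd hc hjX
      · exact hc
    exact hedge ↑i ↑j i.2.1 i.2.2 hjY hjL
  -- the block Hamiltonian
  set Fb : ({i // ¬ p i} → Fin 2) → Matrix ({i // p i} → Fin 2) ({i // p i} → Fin 2) ℂ :=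
    fun s => Hb (fun i j : {i // p i} => J ↑i ↑j) (fun i => J ↑i L) (fun i => J L ↑i)
      (fun i => h ↑i) (fun i => g ↑i) (s Ls) with hFb
  -- decomposition of H
  have hdecomp : H = ΦM p Fb + ΨM p H'' := by
    have hPhi : ΦM p Fb =
        -( (∑ i : {i // p i}, ∑ j : {i // p i}, (J ↑i ↑j : ℂ) •
              (pauliAt (↑i : V) σz * pauliAt (↑j : V) σz))
          + (∑ i : {i // p i}, (J ↑i L : ℂ) • (pauliAt (↑i : V) σz * pauliAt (↑Ls : V) σz))
          + (∑ i : {i // p i}, (J L ↑i : ℂ) • (pauliAt (↑Ls : V) σz * pauliAt (↑i : V) σz)) )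
        - ∑ i : {i // p i}, (h ↑i : ℂ) • pauliAt (↑i : V) σx
        - ∑ i : {i // p i}, (g ↑i : ℂ) • pauliAt (↑i : V) σy := by
      have t1 : ΦM p (fun _ : {i // ¬ p i} → Fin 2 =>
          ∑ i : {i // p i}, ∑ j : {i // p i}, (J ↑i ↑j : ℂ) • (pauliAt i σz * pauliAt j σz))
          = ∑ i : {i // p i}, ∑ j : {i // p i}, (J ↑i ↑j : ℂ) •
              (pauliAt (↑i : V) σz * pauliAt (↑j : V) σz) := by
        rw [ΦM_sum]
        refine Finset.sum_congr rfl fun i _ => ?_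
        rw [ΦM_sum]
        refine Finset.sum_congr rfl fun j _ => ?_
        rw [ΦM_smul, ΦM_mul, ΦM_pauli, ΦM_pauli]
      have t2 : ΦM p (fun s : {i // ¬ p i} → Fin 2 =>
          ∑ i : {i // p i}, (J ↑i L : ℂ) • (pauliAt i σz
            * ((σz (s Ls) (s Ls)) • (1 : Matrix ({i // p i} → Fin 2) ({i // p i} → Fin 2) ℂ))))
          = ∑ i : {i // p i}, (J ↑i L : ℂ) • (pauliAt (↑i : V) σz * pauliAt (↑Ls : V) σz) := by
        rw [ΦM_sum]
        refine Finset.sum_congr rfl fun i _ => ?_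
        rw [ΦM_smul, ΦM_mul, ΦM_pauli, ΦM_zL]
      have t3 : ΦM p (fun s : {i // ¬ p i} → Fin 2 =>
          ∑ i : {i // p i}, (J L ↑i : ℂ) •
            (((σz (s Ls) (s Ls)) • (1 : Matrix ({i // p i} → Fin 2) ({i // p i} → Fin 2) ℂ))
              * pauliAt i σz))
          = ∑ i : {i // p i}, (J L ↑i : ℂ) • (pauliAt (↑Ls : V) σz * pauliAt (↑i : V) σz) := by
        rw [ΦM_sum]
        refine Finset.sum_congr rfl fun i _ => ?_
        rw [ΦM_smul, ΦM_mul, ΦM_zL, ΦM_pauli]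
      have t4 : ΦM p (fun _ : {i // ¬ p i} → Fin 2 =>
          ∑ i : {i // p i}, (h ↑i : ℂ) • pauliAt i σx)
          = ∑ i : {i // p i}, (h ↑i : ℂ) • pauliAt (↑i : V) σx := by
        rw [ΦM_sum]
        refine Finset.sum_congr rfl fun i _ => ?_
        rw [ΦM_smul, ΦM_pauli]
      have t5 : ΦM p (fun _ : {i // ¬ p i} → Fin 2 =>
          ∑ i : {i // p i}, (g ↑i : ℂ) • pauliAt i σy)
          = ∑ i : {i // p i}, (g ↑i : ℂ) • pauliAt (↑i : V) σy := by
        rw [ΦM_sum]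
        refine Finset.sum_congr rfl fun i _ => ?_
        rw [ΦM_smul, ΦM_pauli]
      rw [hFb]
      unfold Hb
      rw [ΦM_sub, ΦM_sub, ΦM_neg, ΦM_add, ΦM_add, t1, t2, t3, t4, t5]
    have hPsi : ΨM p H'' =
        -(∑ i : {i // ¬ p i}, ∑ j : {i // ¬ p i}, (J ↑i ↑j : ℂ) •
            (pauliAt (↑i : V) σz * pauliAt (↑j : V) σz))
        - ∑ i : {i // ¬ p i}, (h ↑i : ℂ) • pauliAt (↑i : V) σx
        - ∑ i : {i // ¬ p i}, (g ↑i : ℂ) • pauliAt (↑i : V) σy := by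
      have u1 : ΨM p (∑ i : {i // ¬ p i}, ∑ j : {i // ¬ p i},
            (J ↑i ↑j : ℂ) • (pauliAt i σz * pauliAt j σz))
          = ∑ i : {i // ¬ p i}, ∑ j : {i // ¬ p i}, (J ↑i ↑j : ℂ) •
              (pauliAt (↑i : V) σz * pauliAt (↑j : V) σz) := by
        rw [ΨM_sum]
        refine Finset.sum_congr rfl fun i _ => ?_
        rw [ΨM_sum]
        refine Finset.sum_congr rfl fun j _ => ?_
        rw [ΨM_smul, ΨM_mul, ΨM_pauli, ΨM_pauli]
      have u2 : ΨM p (∑ i : {i // ¬ p i}, (h ↑i : ℂ) • pauliAt i σx)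
          = ∑ i : {i // ¬ p i}, (h ↑i : ℂ) • pauliAt (↑i : V) σx := by
        rw [ΨM_sum]
        refine Finset.sum_congr rfl fun i _ => ?_
        rw [ΨM_smul, ΨM_pauli]
      have u3 : ΨM p (∑ i : {i // ¬ p i}, (g ↑i : ℂ) • pauliAt i σy)
          = ∑ i : {i // ¬ p i}, (g ↑i : ℂ) • pauliAt (↑i : V) σy := by
        rw [ΨM_sum]
        refine Finset.sum_congr rfl fun i _ => ?_
        rw [ΨM_smul, ΨM_pauli]
      rw [hH'', ΨM_sub, ΨM_sub, ΨM_neg, u1, u2, u3]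
    -- splitting the sums of H
    have e2 : ∑ i : V, (h i : ℂ) • pauliAt i σx
        = ∑ i : {i // p i}, (h ↑i : ℂ) • pauliAt (↑i : V) σx
          + ∑ i : {i // ¬ p i}, (h ↑i : ℂ) • pauliAt (↑i : V) σx :=
      (Fintype.sum_subtype_add_sum_subtype p fun i => (h i : ℂ) • pauliAt i σx).symm
    have e3 : ∑ i : V, (g i : ℂ) • pauliAt i σy
        = ∑ i : {i // p i}, (g ↑i : ℂ) • pauliAt (↑i : V) σy
          + ∑ i : {i // ¬ p i}, (g ↑i : ℂ) • pauliAt (↑i : V) σy :=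
      (Fintype.sum_subtype_add_sum_subtype p fun i => (g i : ℂ) • pauliAt i σy).symm
    have eAS : ∀ i : {i // p i},
        ∑ j : {i // ¬ p i}, (J ↑i ↑j : ℂ) • (pauliAt (↑i : V) σz * pauliAt (↑j : V) σz)
          = (J ↑i L : ℂ) • (pauliAt (↑i : V) σz * pauliAt (↑Ls : V) σz) := by
      intro i
      rw [Finset.sum_eq_single Ls]
      · intro j _ hj
        have hjL : (j : V) ≠ L := fun he => hj (Subtype.ext he)
        rw [(hJ0 i j hjL).1]
        simp
      · intro hc
        exact absurd (Finset.mem_univ Ls) hc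
    have eSA : ∑ i : {i // ¬ p i}, ∑ j : {i // p i},
          (J ↑i ↑j : ℂ) • (pauliAt (↑i : V) σz * pauliAt (↑j : V) σz)
        = ∑ j : {i // p i}, (J L ↑j : ℂ) • (pauliAt (↑Ls : V) σz * pauliAt (↑j : V) σz) := by
      rw [Finset.sum_eq_single Ls]
      · intro i _ hi
        refine Finset.sum_eq_zero fun j _ => ?_
        have hiL : (i : V) ≠ L := fun he => hi (Subtype.ext he)
        rw [(hJ0 j i hiL).2]
        simp
      · intro hc
        exact absurd (Finset.mem_univ Ls) hc
    have e1 : ∑ i : V, ∑ j : V, (J i j : ℂ) • (pauliAt i σz * pauliAt j σz)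
        = ((∑ i : {i // p i}, ∑ j : {i // p i}, (J ↑i ↑j : ℂ) •
              (pauliAt (↑i : V) σz * pauliAt (↑j : V) σz))
            + ∑ i : {i // p i}, (J ↑i L : ℂ) • (pauliAt (↑i : V) σz * pauliAt (↑Ls : V) σz))
          + ((∑ j : {i // p i}, (J L ↑j : ℂ) • (pauliAt (↑Ls : V) σz * pauliAt (↑j : V) σz))
            + ∑ i : {i // ¬ p i}, ∑ j : {i // ¬ p i}, (J ↑i ↑j : ℂ) •
                (pauliAt (↑i : V) σz * pauliAt (↑j : V) σz)) := by
      rw [← Fintype.sum_subtype_add_sum_subtype p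
        (fun i => ∑ j : V, (J i j : ℂ) • (pauliAt i σz * pauliAt j σz))]
      congr 1
      · have : ∀ i : {i // p i},
            ∑ j : V, (J ↑i j : ℂ) • (pauliAt (↑i : V) σz * pauliAt j σz)
            = (∑ j : {i // p i}, (J ↑i ↑j : ℂ) • (pauliAt (↑i : V) σz * pauliAt (↑j : V) σz))
              + (J ↑i L : ℂ) • (pauliAt (↑i : V) σz * pauliAt (↑Ls : V) σz) := by
          intro i
          rw [← Fintype.sum_subtype_add_sum_subtype p
            (fun j => (J ↑i j : ℂ) • (pauliAt (↑i : V) σz * pauliAt j σz)), eAS i]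
        rw [Finset.sum_congr rfl fun i _ => this i, Finset.sum_add_distrib]
      · have : ∀ i : {i // ¬ p i},
            ∑ j : V, (J ↑i j : ℂ) • (pauliAt (↑i : V) σz * pauliAt j σz)
            = (∑ j : {i // p i}, (J ↑i ↑j : ℂ) • (pauliAt (↑i : V) σz * pauliAt (↑j : V) σz))
              + ∑ j : {i // ¬ p i}, (J ↑i ↑j : ℂ) •
                  (pauliAt (↑i : V) σz * pauliAt (↑j : V) σz) := by
          intro i
          rw [← Fintype.sum_subtype_add_sum_subtype p
            (fun j => (J ↑i j : ℂ) • (pauliAt (↑i : V) σz * pauliAt j σz))]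
        rw [Finset.sum_congr rfl fun i _ => this i, Finset.sum_add_distrib, eSA]
    rw [hH, hPhi, hPsi, e1, e2, e3]
    abel
  -- diagonality of H'' at the interface site
  have hKdiag : ∀ s s' : {i // ¬ p i} → Fin 2, s Ls ≠ s' Ls → H'' s s' = 0 := by
    intro s s' hss
    have hsne : s ≠ s' := fun he => hss (congrFun he Ls)
    rw [hH'']
    simp only [Matrix.sub_apply, Matrix.neg_apply, Matrix.sum_apply, Matrix.smul_apply,
      smul_eq_mul]
    have hzz : ∀ i j : {i // ¬ p i}, (pauliAt i σz * pauliAt j σz) s s' = 0 := by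
      intro i j
      rw [pauliAt_z_diagonal, pauliAt_z_diagonal, Matrix.diagonal_mul_diagonal]
      exact Matrix.diagonal_apply_ne _ hsne
    have hxt : ∀ i : {i // ¬ p i}, ((h ↑i : ℂ)) * pauliAt i σx s s' = 0 := by
      intro i
      by_cases hi : i = Ls
      · subst hi
        have : (h (↑Ls : V) : ℂ) = 0 := by
          show ((h L : ℝ) : ℂ) = 0
          rw [hhL, Complex.ofReal_zero]
        rw [this, zero_mul]
      · have : pauliAt i σx s s' = 0 := by
          rw [pauliAt, if_neg]
          intro hc
          exact hss (hc Ls fun he => hi (Subtype.ext (congrArg Subtype.val he)).symm)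
        rw [this, mul_zero]
    have hyt : ∀ i : {i // ¬ p i}, ((g ↑i : ℂ)) * pauliAt i σy s s' = 0 := by
      intro i
      by_cases hi : i = Ls
      · subst hi
        have : (g (↑Ls : V) : ℂ) = 0 := by
          show ((g L : ℝ) : ℂ) = 0
          rw [hgL, Complex.ofReal_zero]
        rw [this, zero_mul]
      · have : pauliAt i σy s s' = 0 := by
          rw [pauliAt, if_neg]
          intro hc
          exact hss (hc Ls fun he => hi (Subtype.ext (congrArg Subtype.val he)).symm)
        rw [this, mul_zero]
    rw [Finset.sum_eq_zero fun i _ => Finset.sum_eq_zero fun j _ => by rw [hzz i j, mul_zero],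
      Finset.sum_eq_zero fun i _ => hxt i, Finset.sum_eq_zero fun i _ => hyt i]
    simp
  -- now apply the key lemma
  refine Shield.key p
    (fun l => (-(β : ℂ)) • Hb (fun i j : {i // p i} => J ↑i ↑j) (fun i => J ↑i L)
      (fun i => J L ↑i) (fun i => h ↑i) (fun i => g ↑i) l)
    ((-(β : ℂ)) • H'') Ls _ ?_ ?_ ?_ ?_
  · -- hfull
    rw [hdecomp, smul_add]
    congr 1
    · rw [← ΦM_smul]
    · rw [← ΨM_smul]
  · -- Kdiag
    intro s s' hss
    rw [Matrix.smul_apply, hKdiag s s' hss, smul_zero]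
  · exact trace_exp_Hb_eq _ _ _ _ _ β
  · exact trace_exp_Hb_ne _ _ _ _ _ β
end
end
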